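/- arXiv:2210.11445 — 8 statements merged into one kernel-verified Lean document; each statement's English description precedes it below -/
import Mathlib

section
/- Let 0 < a ≤ b < ∞, let P be a probability measure on ℝ supported on [a, b], let λ > 0, and for φ > 0 let v(φ) be the unique positive solution of 1/v(φ) = λ + φ ∫ r/(1 + v(φ) r) dP(r). Define tṽ_v(φ) = ( v(φ)^{−2} − φ ∫ r²/(1 + v(φ) r)² dP(r) )^{−1} and tṽ_b(φ) = tṽ_v(φ) · φ ∫ r²/(1 + v(φ) r)² dP(r). Then: (i) v(φ)^{−2} − φ ∫ r²/(1 + v(φ) r)² dP(r) > 0 for every φ > 0, so tṽ_v and tṽ_b are well defined and positive; (ii) tṽ_v is continuous on (0, ∞), tṽ_v(φ) → λ^{−2} as φ → 0⁺, and tṽ_v(φ) → 0 as φ → ∞; (iii) tṽ_b is continuous on (0, ∞), tṽ_b(φ) → 0 as φ → 0⁺, and tṽ_b(φ) → 0 as φ → ∞. (Positivity, continuity, and limits of the variance and bias fixed-point functionals for ridge regression.) -/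
open MeasureTheory Filter Set

namespace RidgeAux

variable {a b : ℝ} {P : Measure ℝ}

lemma meas1 (x : ℝ) : AEStronglyMeasurable (fun r : ℝ => r / (1 + x * r)) P :=
  (measurable_id.div ((measurable_const.add (measurable_const.mul measurable_id)))).aestronglyMeasurable

lemma meas2 (x : ℝ) : AEStronglyMeasurable (fun r : ℝ => r ^ 2 / (1 + x * r) ^ 2) P :=
  ((measurable_id.pow_const 2).div
    (((measurable_const.add (measurable_const.mul measurable_id)).pow_const 2))).aestronglyMeasurable

lemma den_pos (ha : 0 < a) {x r : ℝ} (hx : 0 ≤ x) (hr : r ∈ Icc a b) : 0 < 1 + x * r := by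
  have : 0 ≤ x * r := mul_nonneg hx (le_trans ha.le hr.1)
  linarith

lemma integrable1 [IsProbabilityMeasure P] (ha : 0 < a) (hab : a ≤ b)
    (hsupp : ∀ᵐ r ∂P, r ∈ Icc a b) {x : ℝ} (hx : 0 ≤ x) :
    Integrable (fun r : ℝ => r / (1 + x * r)) P := by
  have hb : 0 < b := lt_of_lt_of_le ha hab
  refine (integrable_const b).mono' (meas1 x) ?_
  filter_upwards [hsupp] with r hr
  have hd := den_pos ha hx hr
  have hr0 : 0 < r := lt_of_lt_of_le ha hr.1
  have h1 : 0 < r / (1 + x * r) := div_pos hr0 hd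
  rw [Real.norm_eq_abs, abs_of_pos h1, div_le_iff₀ hd]
  nlinarith [hr.2, mul_nonneg hb.le (mul_nonneg hx hr0.le)]

lemma integrable2 [IsProbabilityMeasure P] (ha : 0 < a) (hab : a ≤ b)
    (hsupp : ∀ᵐ r ∂P, r ∈ Icc a b) {x : ℝ} (hx : 0 ≤ x) :
    Integrable (fun r : ℝ => r ^ 2 / (1 + x * r) ^ 2) P := by
  have hb : 0 < b := lt_of_lt_of_le ha hab
  refine (integrable_const (b ^ 2)).mono' (meas2 x) ?_
  filter_upwards [hsupp] with r hr
  have hd := den_pos ha hx hr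
  have hr0 : 0 < r := lt_of_lt_of_le ha hr.1
  have h1 : 0 < r ^ 2 / (1 + x * r) ^ 2 := div_pos (by positivity) (by positivity)
  rw [Real.norm_eq_abs, abs_of_pos h1, div_le_iff₀ (by positivity : (0:ℝ) < (1 + x*r)^2)]
  have key : r ≤ b * (1 + x * r) := by
    nlinarith [hr.2, mul_nonneg hb.le (mul_nonneg hx hr0.le)]
  nlinarith [pow_le_pow_left₀ hr0.le key 2]

lemma G_ge [IsProbabilityMeasure P] (ha : 0 < a) (hab : a ≤ b)
    (hsupp : ∀ᵐ r ∂P, r ∈ Icc a b) {x : ℝ} (hx : 0 ≤ x) :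
    a / (1 + x * b) ≤ ∫ r, r / (1 + x * r) ∂P := by
  have hdb : (0:ℝ) < 1 + x * b := den_pos ha hx ⟨hab, le_refl b⟩
  have := integral_mono_ae (integrable_const (a / (1 + x * b)))
    (integrable1 ha hab hsupp hx) ?_
  · simpa using this
  · filter_upwards [hsupp] with r hr
    have hd := den_pos ha hx hr
    have hr0 : 0 < r := lt_of_lt_of_le ha hr.1
    rw [div_le_div_iff₀ hdb hd]
    nlinarith [hr.1, hr.2, mul_nonneg hx hr0.le]

lemma G_pos [IsProbabilityMeasure P] (ha : 0 < a) (hab : a ≤ b)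
    (hsupp : ∀ᵐ r ∂P, r ∈ Icc a b) {x : ℝ} (hx : 0 ≤ x) :
    0 < ∫ r, r / (1 + x * r) ∂P :=
  lt_of_lt_of_le (div_pos ha (den_pos ha hx ⟨hab, le_refl b⟩)) (G_ge ha hab hsupp hx)

lemma J_ge [IsProbabilityMeasure P] (ha : 0 < a) (hab : a ≤ b)
    (hsupp : ∀ᵐ r ∂P, r ∈ Icc a b) {x : ℝ} (hx : 0 ≤ x) :
    a ^ 2 / (1 + x * b) ^ 2 ≤ ∫ r, r ^ 2 / (1 + x * r) ^ 2 ∂P := by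
  have hdb : (0:ℝ) < 1 + x * b := den_pos ha hx ⟨hab, le_refl b⟩
  have := integral_mono_ae (integrable_const (a ^ 2 / (1 + x * b) ^ 2))
    (integrable2 ha hab hsupp hx) ?_
  · simpa using this
  · filter_upwards [hsupp] with r hr
    have hd := den_pos ha hx hr
    have hr0 : 0 < r := lt_of_lt_of_le ha hr.1
    rw [div_le_div_iff₀ (by positivity) (by positivity)]
    have key : a * (1 + x * r) ≤ r * (1 + x * b) := by
      nlinarith [hr.1, hr.2, mul_nonneg hx hr0.le]
    have h2 := pow_le_pow_left₀ (by positivity : (0:ℝ) ≤ a * (1 + x * r)) key 2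
    nlinarith [h2]

lemma J_pos [IsProbabilityMeasure P] (ha : 0 < a) (hab : a ≤ b)
    (hsupp : ∀ᵐ r ∂P, r ∈ Icc a b) {x : ℝ} (hx : 0 ≤ x) :
    0 < ∫ r, r ^ 2 / (1 + x * r) ^ 2 ∂P :=
  lt_of_lt_of_le (div_pos (pow_pos ha 2) (pow_pos (den_pos ha hx ⟨hab, le_refl b⟩) 2))
    (J_ge ha hab hsupp hx)

lemma J_le_sq [IsProbabilityMeasure P] (ha : 0 < a) (hab : a ≤ b)
    (hsupp : ∀ᵐ r ∂P, r ∈ Icc a b) {x : ℝ} (hx : 0 ≤ x) :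
    ∫ r, r ^ 2 / (1 + x * r) ^ 2 ∂P ≤ b ^ 2 := by
  have := integral_mono_ae (integrable2 ha hab hsupp hx) (integrable_const (b ^ 2)) ?_
  · simpa using this
  · filter_upwards [hsupp] with r hr
    have hb : 0 < b := lt_of_lt_of_le ha hab
    have hd := den_pos ha hx hr
    have hr0 : 0 < r := lt_of_lt_of_le ha hr.1
    rw [div_le_iff₀ (by positivity : (0:ℝ) < (1 + x*r)^2)]
    have key : r ≤ b * (1 + x * r) := by
      nlinarith [hr.2, mul_nonneg hb.le (mul_nonneg hx hr0.le)]
    nlinarith [pow_le_pow_left₀ hr0.le key 2]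

lemma J_le_inv_G [IsProbabilityMeasure P] (ha : 0 < a) (hab : a ≤ b)
    (hsupp : ∀ᵐ r ∂P, r ∈ Icc a b) {x : ℝ} (hx : 0 < x) :
    ∫ r, r ^ 2 / (1 + x * r) ^ 2 ∂P ≤ x⁻¹ * ∫ r, r / (1 + x * r) ∂P := by
  rw [← integral_const_mul]
  refine integral_mono_ae (integrable2 ha hab hsupp hx.le)
    ((integrable1 ha hab hsupp hx.le).const_mul _) ?_
  filter_upwards [hsupp] with r hr
  have hd := den_pos ha hx.le hr
  have hr0 : 0 < r := lt_of_lt_of_le ha hr.1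
  rw [mul_div_assoc', div_le_div_iff₀ (by positivity) hd]
  have hxr : x * r ≤ 1 + x * r := by linarith
  rw [inv_mul_eq_div, div_mul_eq_mul_div, le_div_iff₀ hx]
  nlinarith [mul_le_mul_of_nonneg_right hxr (mul_pos hr0 hd).le]

lemma J_le_b_G [IsProbabilityMeasure P] (ha : 0 < a) (hab : a ≤ b)
    (hsupp : ∀ᵐ r ∂P, r ∈ Icc a b) {x : ℝ} (hx : 0 ≤ x) :
    ∫ r, r ^ 2 / (1 + x * r) ^ 2 ∂P ≤ b * ∫ r, r / (1 + x * r) ∂P := by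
  rw [← integral_const_mul]
  refine integral_mono_ae (integrable2 ha hab hsupp hx)
    ((integrable1 ha hab hsupp hx).const_mul _) ?_
  filter_upwards [hsupp] with r hr
  have hd := den_pos ha hx hr
  have hr0 : 0 < r := lt_of_lt_of_le ha hr.1
  have hb : 0 < b := lt_of_lt_of_le ha hab
  rw [mul_div_assoc', div_le_div_iff₀ (by positivity) hd]
  have key : r ≤ b * (1 + x * r) := by
    nlinarith [hr.2, mul_nonneg hb.le (mul_nonneg hx hr0.le)]
  nlinarith [mul_le_mul_of_nonneg_right key (mul_pos hr0 hd).le]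

lemma xG_mono [IsProbabilityMeasure P] (ha : 0 < a) (hab : a ≤ b)
    (hsupp : ∀ᵐ r ∂P, r ∈ Icc a b) {x y : ℝ} (hx : 0 ≤ x) (hxy : x ≤ y) :
    x * ∫ r, r / (1 + x * r) ∂P ≤ y * ∫ r, r / (1 + y * r) ∂P := by
  rw [← integral_const_mul, ← integral_const_mul]
  refine integral_mono_ae ((integrable1 ha hab hsupp hx).const_mul _)
    ((integrable1 ha hab hsupp (le_trans hx hxy)).const_mul _) ?_
  filter_upwards [hsupp] with r hr
  have hdx := den_pos ha hx hr
  have hdy := den_pos ha (le_trans hx hxy) hr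
  have hr0 : 0 < r := lt_of_lt_of_le ha hr.1
  rw [mul_div_assoc', mul_div_assoc', div_le_div_iff₀ hdx hdy]
  nlinarith [mul_le_mul_of_nonneg_right hxy hr0.le]

lemma J_contOn [IsProbabilityMeasure P] (ha : 0 < a) (hab : a ≤ b)
    (hsupp : ∀ᵐ r ∂P, r ∈ Icc a b) :
    ContinuousOn (fun x : ℝ => ∫ r, r ^ 2 / (1 + x * r) ^ 2 ∂P) (Ici 0) := by
  refine continuousOn_of_dominated (fun x _ => meas2 x) (fun x hx => ?_)
    (integrable_const (b ^ 2)) ?_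
  · filter_upwards [hsupp] with r hr
    have hb : 0 < b := lt_of_lt_of_le ha hab
    have hd := den_pos ha hx hr
    have hr0 : 0 < r := lt_of_lt_of_le ha hr.1
    have h1 : 0 < r ^ 2 / (1 + x * r) ^ 2 := by positivity
    rw [Real.norm_eq_abs, abs_of_pos h1, div_le_iff₀ (by positivity : (0:ℝ) < (1 + x*r)^2)]
    have key : r ≤ b * (1 + x * r) := by
      nlinarith [hr.2, mul_nonneg hb.le (mul_nonneg hx hr0.le)]
    nlinarith [pow_le_pow_left₀ hr0.le key 2]
  · filter_upwards [hsupp] with r hr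
    refine ContinuousOn.div continuousOn_const
      ((continuous_const.add (continuous_id.mul continuous_const)).pow 2).continuousOn ?_
    intro x hx
    have hd := den_pos ha hx hr
    positivity

end RidgeAux

open RidgeAux in
/-- Positivity, continuity, and limits of the variance and bias fixed-point functionals
for ridge regression. -/
theorem ridge_variance_bias_functionals_properties
    (a b : ℝ) (ha : 0 < a) (hab : a ≤ b)
    (P : Measure ℝ) [IsProbabilityMeasure P]
    (hsupp : ∀ᵐ r ∂P, r ∈ Icc a b)
    (lam : ℝ) (hlam : 0 < lam)
    (v tvv tvb : ℝ → ℝ)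
    (hv : ∀ φ : ℝ, 0 < φ →
      0 < v φ ∧ 1 / v φ = lam + φ * ∫ r, r / (1 + v φ * r) ∂P)
    (hvu : ∀ φ : ℝ, 0 < φ → ∀ x : ℝ, 0 < x →
      1 / x = lam + φ * ∫ r, r / (1 + x * r) ∂P → x = v φ)
    (htvv : ∀ φ : ℝ, tvv φ =
      ((1 / v φ) ^ 2 - φ * ∫ r, r ^ 2 / (1 + v φ * r) ^ 2 ∂P)⁻¹)
    (htvb : ∀ φ : ℝ, tvb φ = tvv φ * (φ * ∫ r, r ^ 2 / (1 + v φ * r) ^ 2 ∂P)) :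
    (∀ φ : ℝ, 0 < φ →
      0 < (1 / v φ) ^ 2 - φ * ∫ r, r ^ 2 / (1 + v φ * r) ^ 2 ∂P
        ∧ 0 < tvv φ ∧ 0 < tvb φ)
    ∧ ContinuousOn tvv (Ioi 0)
    ∧ Tendsto tvv (nhdsWithin 0 (Ioi 0)) (nhds (1 / lam ^ 2))
    ∧ Tendsto tvv atTop (nhds 0)
    ∧ ContinuousOn tvb (Ioi 0)
    ∧ Tendsto tvb (nhdsWithin 0 (Ioi 0)) (nhds 0)
    ∧ Tendsto tvb atTop (nhds 0) := by
  have hb : 0 < b := lt_of_lt_of_le ha hab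
  have vpos : ∀ φ : ℝ, 0 < φ → 0 < v φ := fun φ hφ => (hv φ hφ).1
  have veq : ∀ φ : ℝ, 0 < φ →
      1 / v φ = lam + φ * ∫ r, r / (1 + v φ * r) ∂P := fun φ hφ => (hv φ hφ).2
  -- v φ < 1/lam
  have vlt : ∀ φ : ℝ, 0 < φ → v φ < 1 / lam := by
    intro φ hφ
    have h1 := veq φ hφ
    have h2 : 0 < ∫ r, r / (1 + v φ * r) ∂P := G_pos ha hab hsupp (vpos φ hφ).le
    have h3 : lam < 1 / v φ := by nlinarith [mul_pos hφ h2]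
    have h4 : lam * v φ < 1 := (lt_div_iff₀ (vpos φ hφ)).1 h3
    rw [lt_div_iff₀ hlam]
    nlinarith
  -- strict antitonicity
  have vanti : ∀ φ₁ φ₂ : ℝ, 0 < φ₁ → φ₁ < φ₂ → v φ₂ < v φ₁ := by
    intro φ₁ φ₂ h1 h12
    by_contra hcon
    push_neg at hcon
    have h2 : 0 < φ₂ := h1.trans h12
    have hv₁ := vpos φ₁ h1
    have hv₂ := vpos φ₂ h2
    have e₁ : 1 = lam * v φ₁ + φ₁ * (v φ₁ * ∫ r, r / (1 + v φ₁ * r) ∂P) := by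
      have h := veq φ₁ h1
      have := congrArg (fun t => t * v φ₁) h
      rw [one_div, inv_mul_cancel₀ hv₁.ne'] at this
      calc (1:ℝ) = (lam + φ₁ * ∫ r, r / (1 + v φ₁ * r) ∂P) * v φ₁ := this
        _ = lam * v φ₁ + φ₁ * (v φ₁ * ∫ r, r / (1 + v φ₁ * r) ∂P) := by ring
    have e₂ : 1 = lam * v φ₂ + φ₂ * (v φ₂ * ∫ r, r / (1 + v φ₂ * r) ∂P) := by
      have h := veq φ₂ h2
      have := congrArg (fun t => t * v φ₂) h
      rw [one_div, inv_mul_cancel₀ hv₂.ne'] at this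
      calc (1:ℝ) = (lam + φ₂ * ∫ r, r / (1 + v φ₂ * r) ∂P) * v φ₂ := this
        _ = lam * v φ₂ + φ₂ * (v φ₂ * ∫ r, r / (1 + v φ₂ * r) ∂P) := by ring
    have mono := xG_mono ha hab hsupp hv₁.le hcon
    have Gpos₁ : 0 < ∫ r, r / (1 + v φ₁ * r) ∂P := G_pos ha hab hsupp hv₁.le
    nlinarith [mul_pos hv₁ Gpos₁, mul_le_mul_of_nonneg_left mono h2.le,
      mul_le_mul_of_nonneg_left hcon hlam.le]
  -- surjectivity onto (0, 1/lam)
  have vsurj : ∀ x : ℝ, 0 < x → x < 1 / lam → ∃ φ : ℝ, 0 < φ ∧ v φ = x := by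
    intro x hx hxl
    have Gp : 0 < ∫ r, r / (1 + x * r) ∂P := G_pos ha hab hsupp hx.le
    have hxlam : x * lam < 1 := (lt_div_iff₀ hlam).1 hxl
    have hnum : 0 < 1 / x - lam := by
      have : lam < 1 / x := by rw [lt_div_iff₀ hx]; nlinarith
      linarith
    refine ⟨(1 / x - lam) / (∫ r, r / (1 + x * r) ∂P), div_pos hnum Gp, ?_⟩
    symm
    refine hvu _ (div_pos hnum Gp) x hx ?_
    rw [div_mul_cancel₀ _ (ne_of_gt Gp)]
    ring
  -- continuity of v
  have vcont : ContinuousOn v (Ioi 0) := by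
    intro φ₀ hφ₀
    have hφ₀' : (0:ℝ) < φ₀ := hφ₀
    apply ContinuousAt.continuousWithinAt
    rw [Metric.continuousAt_iff]
    intro ε hε
    set x₀ := v φ₀ with hx₀
    have hx₀pos : 0 < x₀ := vpos φ₀ hφ₀'
    have hx₀lt : x₀ < 1 / lam := vlt φ₀ hφ₀'
    set ε' := min (ε / 2) (min (x₀ / 2) ((1 / lam - x₀) / 2)) with hε'def
    have hε' : 0 < ε' := by
      apply lt_min (by linarith) (lt_min (by linarith) (by linarith))
    have hε'le : ε' ≤ ε / 2 := min_le_left _ _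
    have hε'le2 : ε' ≤ x₀ / 2 := (min_le_right _ _).trans (min_le_left _ _)
    have hε'le3 : ε' ≤ (1 / lam - x₀) / 2 := (min_le_right _ _).trans (min_le_right _ _)
    obtain ⟨φ₂, hφ₂pos, hφ₂⟩ := vsurj (x₀ - ε') (by linarith) (by linarith)
    obtain ⟨φ₁, hφ₁pos, hφ₁⟩ := vsurj (x₀ + ε') (by linarith) (by linarith)
    have hlt1 : φ₁ < φ₀ := by
      by_contra h
      push_neg at h
      rcases h.lt_or_eq with h' | h'
      · have := vanti φ₀ φ₁ hφ₀' h'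
        rw [hφ₁] at this; linarith
      · rw [← h'] at hφ₁; rw [← hx₀] at hφ₁; linarith
    have hlt2 : φ₀ < φ₂ := by
      by_contra h
      push_neg at h
      rcases h.lt_or_eq with h' | h'
      · have := vanti φ₂ φ₀ hφ₂pos h'
        rw [hφ₂] at this; linarith
      · rw [h'] at hφ₂; rw [← hx₀] at hφ₂; linarith
    refine ⟨min (φ₀ - φ₁) (φ₂ - φ₀), lt_min (by linarith) (by linarith), ?_⟩
    intro φ hdist
    rw [Real.dist_eq] at hdist ⊢
    have habs := abs_lt.1 hdist
    have hd1 : min (φ₀ - φ₁) (φ₂ - φ₀) ≤ φ₀ - φ₁ := min_le_left _ _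
    have hd2 : min (φ₀ - φ₁) (φ₂ - φ₀) ≤ φ₂ - φ₀ := min_le_right _ _
    have hφ1 : φ₁ < φ := by linarith [habs.1]
    have hφ2 : φ < φ₂ := by linarith [habs.2]
    have hφpos : 0 < φ := hφ₁pos.trans hφ1
    have b1 : v φ < x₀ + ε' := by
      have := vanti φ₁ φ hφ₁pos hφ1
      rw [hφ₁] at this; linarith
    have b2 : x₀ - ε' < v φ := by
      have := vanti φ φ₂ hφpos hφ2
      rw [hφ₂] at this; linarith
    rw [abs_lt]
    constructor <;> linarith
  -- limits of v
  have vtend0 : Tendsto v (nhdsWithin 0 (Ioi 0)) (nhds (1 / lam)) := by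
    rw [tendsto_order]
    constructor
    · intro c hc
      rcases le_or_gt c 0 with h | h
      · filter_upwards [self_mem_nhdsWithin] with φ hφ
        exact lt_of_le_of_lt h (vpos φ hφ)
      · obtain ⟨φ₀, hpos, hvφ₀⟩ := vsurj ((c + 1 / lam) / 2) (by linarith) (by linarith)
        have hmem : Ioo (0:ℝ) φ₀ ∈ nhdsWithin (0:ℝ) (Ioi 0) :=
          Ioo_mem_nhdsGT_of_mem ⟨le_refl 0, hpos⟩
        filter_upwards [hmem] with φ hφ
        have := vanti φ φ₀ hφ.1 hφ.2
        rw [hvφ₀] at this; linarith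
    · intro c hc
      filter_upwards [self_mem_nhdsWithin] with φ hφ
      exact (vlt φ hφ).trans hc
  have vtendTop : Tendsto v atTop (nhds 0) := by
    rw [tendsto_order]
    constructor
    · intro c hc
      filter_upwards [eventually_gt_atTop 0] with φ hφ
      exact hc.trans (vpos φ hφ)
    · intro c hc
      have hx : 0 < min (c / 2) (1 / (2 * lam)) := by
        apply lt_min (by linarith) (by positivity)
      have hx2 : min (c / 2) (1 / (2 * lam)) < 1 / lam := by
        have h1 : min (c / 2) (1 / (2 * lam)) ≤ 1 / (2 * lam) := min_le_right _ _
        have h2 : 1 / (2 * lam) < 1 / lam := by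
          rw [div_lt_div_iff₀ (by positivity) hlam]; nlinarith
        linarith
      obtain ⟨φ₀, hpos, hvφ₀⟩ := vsurj _ hx hx2
      filter_upwards [eventually_gt_atTop φ₀] with φ hφ
      have := vanti φ₀ φ hpos hφ
      rw [hvφ₀] at this
      have : v φ < c / 2 := lt_of_lt_of_le this (min_le_left _ _)
      linarith
  -- denominator lower bound
  have Dge : ∀ φ : ℝ, 0 < φ →
      lam / v φ ≤ (1 / v φ) ^ 2 - φ * ∫ r, r ^ 2 / (1 + v φ * r) ^ 2 ∂P := by
    intro φ hφ
    have hvp := vpos φ hφ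
    have key := mul_le_mul_of_nonneg_left (J_le_inv_G ha hab hsupp hvp) hφ.le
    have e : φ * ∫ r, r / (1 + v φ * r) ∂P = 1 / v φ - lam := by
      linarith [veq φ hφ]
    have h1 : φ * ∫ r, r ^ 2 / (1 + v φ * r) ^ 2 ∂P
        ≤ (v φ)⁻¹ * (1 / v φ - lam) := by
      rw [← e]
      calc φ * ∫ r, r ^ 2 / (1 + v φ * r) ^ 2 ∂P
          ≤ φ * ((v φ)⁻¹ * ∫ r, r / (1 + v φ * r) ∂P) := key
        _ = (v φ)⁻¹ * (φ * ∫ r, r / (1 + v φ * r) ∂P) := by ring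
    simp only [one_div, div_eq_mul_inv] at h1 ⊢
    nlinarith [h1]
  have Dpos : ∀ φ : ℝ, 0 < φ →
      0 < (1 / v φ) ^ 2 - φ * ∫ r, r ^ 2 / (1 + v φ * r) ^ 2 ∂P := by
    intro φ hφ
    exact lt_of_lt_of_le (div_pos hlam (vpos φ hφ)) (Dge φ hφ)
  have tvvpos : ∀ φ : ℝ, 0 < φ → 0 < tvv φ := by
    intro φ hφ; rw [htvv]; exact inv_pos.2 (Dpos φ hφ)
  have φJpos : ∀ φ : ℝ, 0 < φ →
      0 < φ * ∫ r, r ^ 2 / (1 + v φ * r) ^ 2 ∂P := by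
    intro φ hφ
    exact mul_pos hφ (J_pos ha hab hsupp (vpos φ hφ).le)
  have tvbpos : ∀ φ : ℝ, 0 < φ → 0 < tvb φ := by
    intro φ hφ; rw [htvb]; exact mul_pos (tvvpos φ hφ) (φJpos φ hφ)
  -- continuity of the composed integral
  have Jvcont : ContinuousOn (fun φ => ∫ r, r ^ 2 / (1 + v φ * r) ^ 2 ∂P) (Ioi 0) := by
    exact (J_contOn ha hab hsupp).comp vcont (fun φ hφ => (vpos φ hφ).le)
  have Dcont : ContinuousOn
      (fun φ => (1 / v φ) ^ 2 - φ * ∫ r, r ^ 2 / (1 + v φ * r) ^ 2 ∂P) (Ioi 0) := by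
    apply ContinuousOn.sub
    · exact (ContinuousOn.div continuousOn_const vcont
        (fun φ hφ => (vpos φ hφ).ne')).pow 2
    · exact ContinuousOn.mul continuousOn_id Jvcont
  have tvv_eq : tvv = fun φ =>
      ((1 / v φ) ^ 2 - φ * ∫ r, r ^ 2 / (1 + v φ * r) ^ 2 ∂P)⁻¹ := funext htvv
  have tvb_eq : tvb = fun φ =>
      tvv φ * (φ * ∫ r, r ^ 2 / (1 + v φ * r) ^ 2 ∂P) := funext htvb
  have tvvcont : ContinuousOn tvv (Ioi 0) := by
    rw [tvv_eq]
    exact Dcont.inv₀ (fun φ hφ => (Dpos φ hφ).ne')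
  have tvbcont : ContinuousOn tvb (Ioi 0) := by
    rw [tvb_eq]
    exact tvvcont.mul (ContinuousOn.mul continuousOn_id Jvcont)
  -- limits at 0+
  have hJ0 : Tendsto (fun φ => φ * ∫ r, r ^ 2 / (1 + v φ * r) ^ 2 ∂P)
      (nhdsWithin 0 (Ioi 0)) (nhds 0) := by
    apply squeeze_zero' (g := fun φ => φ * b ^ 2)
    · filter_upwards [self_mem_nhdsWithin] with φ hφ
      exact (φJpos φ hφ).le
    · filter_upwards [self_mem_nhdsWithin] with φ hφ
      exact mul_le_mul_of_nonneg_left (J_le_sq ha hab hsupp (vpos φ hφ).le)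
        (le_of_lt hφ)
    · have h : Tendsto (fun φ : ℝ => φ * b ^ 2) (nhds 0) (nhds (0 * b ^ 2)) :=
        (continuous_id.mul continuous_const).tendsto 0
      rw [zero_mul] at h
      exact h.mono_left nhdsWithin_le_nhds
  have hvinv : Tendsto (fun φ => 1 / v φ) (nhdsWithin 0 (Ioi 0)) (nhds lam) := by
    have h := vtend0.inv₀ (by positivity : (1:ℝ) / lam ≠ 0)
    rw [one_div, inv_inv] at h
    simpa only [one_div] using h
  have hD0 : Tendsto (fun φ => (1 / v φ) ^ 2 - φ * ∫ r, r ^ 2 / (1 + v φ * r) ^ 2 ∂P)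
      (nhdsWithin 0 (Ioi 0)) (nhds (lam ^ 2)) := by
    have h := (hvinv.pow 2).sub hJ0
    rw [sub_zero] at h
    exact h
  have tvvtend0 : Tendsto tvv (nhdsWithin 0 (Ioi 0)) (nhds (1 / lam ^ 2)) := by
    rw [tvv_eq, one_div]
    exact hD0.inv₀ (by positivity)
  have tvbtend0 : Tendsto tvb (nhdsWithin 0 (Ioi 0)) (nhds 0) := by
    rw [tvb_eq]
    have h := tvvtend0.mul hJ0
    rw [mul_zero] at h
    exact h
  -- limits at infinity
  have tvvtendTop : Tendsto tvv atTop (nhds 0) := by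
    apply squeeze_zero' (g := fun φ => v φ / lam)
    · filter_upwards [eventually_gt_atTop 0] with φ hφ
      exact (tvvpos φ hφ).le
    · filter_upwards [eventually_gt_atTop 0] with φ hφ
      rw [htvv]
      have h1 := Dge φ hφ
      have h2 : ((1 / v φ) ^ 2 - φ * ∫ r, r ^ 2 / (1 + v φ * r) ^ 2 ∂P)⁻¹
          ≤ (lam / v φ)⁻¹ :=
        inv_anti₀ (div_pos hlam (vpos φ hφ)) h1
      rwa [inv_div] at h2
    · have h := vtendTop.div_const lam
      rw [zero_div] at h
      exact h
  have tvbtendTop : Tendsto tvb atTop (nhds 0) := by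
    apply squeeze_zero' (g := fun φ => 2 * b * v φ)
    · filter_upwards [eventually_gt_atTop 0] with φ hφ
      exact (tvbpos φ hφ).le
    · have hev : ∀ᶠ φ in atTop, v φ < 1 / (2 * b) :=
        vtendTop.eventually_lt_const (by positivity)
      filter_upwards [eventually_gt_atTop 0, hev] with φ hφ hvb
      have hu : 0 < v φ := vpos φ hφ
      have e : φ * ∫ r, r / (1 + v φ * r) ∂P = 1 / v φ - lam := by
        linarith [veq φ hφ]
      have hφJ : φ * ∫ r, r ^ 2 / (1 + v φ * r) ^ 2 ∂P ≤ b / v φ := by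
        have h1 := mul_le_mul_of_nonneg_left (J_le_b_G ha hab hsupp hu.le) hφ.le
        calc φ * ∫ r, r ^ 2 / (1 + v φ * r) ^ 2 ∂P
            ≤ φ * (b * ∫ r, r / (1 + v φ * r) ∂P) := h1
          _ = b * (φ * ∫ r, r / (1 + v φ * r) ∂P) := by ring
          _ = b * (1 / v φ - lam) := by rw [e]
          _ ≤ b * (1 / v φ) := by nlinarith
          _ = b / v φ := by rw [mul_one_div]
      have hbv : b / v φ ≤ 1 / (2 * (v φ) ^ 2) := by
        rw [div_le_div_iff₀ hu (by positivity)]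
        have h2 : 2 * b * v φ ≤ 1 := by
          have := (lt_div_iff₀ (by positivity : (0:ℝ) < 2 * b)).1 hvb
          nlinarith
        nlinarith [sq_nonneg (v φ)]
      have hone : (1 : ℝ) / v φ ^ 2 = (1 / v φ) ^ 2 := by
        rw [div_pow, one_pow]
      have hD : 1 / (2 * (v φ) ^ 2) ≤
          (1 / v φ) ^ 2 - φ * ∫ r, r ^ 2 / (1 + v φ * r) ^ 2 ∂P := by
        have e2 : (1 : ℝ) / (2 * (v φ) ^ 2) = (1 / 2) * (1 / (v φ) ^ 2) := by
          ring
        rw [← hone]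
        rw [e2] at hbv ⊢
        linarith [hφJ, hbv]
      have hDpos : 0 < (1 / v φ) ^ 2 - φ * ∫ r, r ^ 2 / (1 + v φ * r) ^ 2 ∂P :=
        lt_of_lt_of_le (by positivity) hD
      have h3 : ((1 / v φ) ^ 2 - φ * ∫ r, r ^ 2 / (1 + v φ * r) ^ 2 ∂P)⁻¹
          ≤ 2 * (v φ) ^ 2 := by
        have h := inv_anti₀ (by positivity : (0:ℝ) < 1 / (2 * (v φ) ^ 2)) hD
        have hrw : ((1:ℝ) / (2 * (v φ) ^ 2))⁻¹ = 2 * (v φ) ^ 2 := by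
          rw [one_div, inv_inv]
        rwa [hrw] at h
      rw [htvb, htvv]
      calc ((1 / v φ) ^ 2 - φ * ∫ r, r ^ 2 / (1 + v φ * r) ^ 2 ∂P)⁻¹
            * (φ * ∫ r, r ^ 2 / (1 + v φ * r) ^ 2 ∂P)
          ≤ (2 * (v φ) ^ 2) * (φ * ∫ r, r ^ 2 / (1 + v φ * r) ^ 2 ∂P) := by
            apply mul_le_mul_of_nonneg_right h3 (φJpos φ hφ).le
        _ ≤ (2 * (v φ) ^ 2) * (b / v φ) := by
            apply mul_le_mul_of_nonneg_left hφJ (by positivity)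
        _ = 2 * b * v φ := by field_simp
    · have h := vtendTop.const_mul (2 * b)
      rw [mul_zero] at h
      exact h
  refine ⟨fun φ hφ => ⟨Dpos φ hφ, tvvpos φ hφ, tvbpos φ hφ⟩,
    tvvcont, tvvtend0, tvvtendTop, tvbcont, tvbtend0, tvbtendTop⟩
end

section
/- In the ridge fixed-point setting with λ > 0, fix 0 < φ ≤ θ < ∞ and ρ², σ² ≥ 0. For M ∈ ℕ define B_M = (1/M)·B(θ, θ) + (1 − 1/M)·B(φ, θ) and V_M = (1/M)·V(θ, θ) + (1 − 1/M)·V(φ, θ), and set B_∞ = B(φ, θ), V_∞ = V(φ, θ). Then for every M ∈ ℕ: B_∞ ≤ B_{M+1} ≤ B_M and V_∞ ≤ V_{M+1} ≤ V_M; the inequalities between B's are strict whenever ρ² > 0 and φ < θ, and the inequalities between V's are strict whenever σ² > 0 and φ < θ. Consequently the limiting risk σ² + B_M + V_M of the subagged ridge predictor is non-increasing in the number of bags M. (Improvement due to subagging: monotonicity of the asymptotic bias and variance in the number of bags.) -/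
/-!
Both the bias and the variance of the `M`-bag predictor have the form `X + (Y - X) / M`,
with `X` the value at `ϑ = φ` and `Y` the value at `ϑ = θ`, so everything reduces to
`tv φ θ ≤ tv θ θ` (strictly if `φ < θ`). Since `x ↦ x / (D - x)` increases on `x < D` for `D > 0`,
this follows from `θ J(θ) < v(θ)⁻²`, which comes out of the fixed-point equation:
`r² / (1 + v r)² ≤ r / (v (1 + v r))` gives `θ J ≤ θ ∫ r / (1 + v r) dH / v = (v⁻¹ - λ) / v`.
-/

open MeasureTheory Set

/-- The paper's `B_M` (resp. `V_M`), with `X = B_∞` and `Y = B_1` (resp. `V_∞`, `V_1`). -/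
noncomputable def bagAverage (X Y : ℝ) (M : ℕ) : ℝ := (1 / (M : ℝ)) * Y + (1 - 1 / (M : ℝ)) * X

section BagAverage

variable {X Y : ℝ}

lemma bagAverage_eq (X Y : ℝ) (M : ℕ) : bagAverage X Y M = X + (Y - X) / M := by
  unfold bagAverage; ring

lemma le_bagAverage (h : X ≤ Y) (M : ℕ) : X ≤ bagAverage X Y M := by
  rw [bagAverage_eq]
  have : 0 ≤ (Y - X) / M := div_nonneg (sub_nonneg.mpr h) M.cast_nonneg
  linarith

lemma lt_bagAverage (h : X < Y) {M : ℕ} (hM : 0 < M) : X < bagAverage X Y M := by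
  rw [bagAverage_eq]
  have : 0 < (Y - X) / M := div_pos (sub_pos.mpr h) (by exact_mod_cast hM)
  linarith

lemma bagAverage_succ_le (h : X ≤ Y) {M : ℕ} (hM : 0 < M) :
    bagAverage X Y (M + 1) ≤ bagAverage X Y M := by
  rw [bagAverage_eq, bagAverage_eq]
  gcongr
  · linarith

lemma bagAverage_succ_lt (h : X < Y) {M : ℕ} (hM : 0 < M) :
    bagAverage X Y (M + 1) < bagAverage X Y M := by
  rw [bagAverage_eq, bagAverage_eq]
  gcongr
  · linarith

end BagAverage

lemma div_sub_le_div_sub {x y D : ℝ} (hxy : x ≤ y) (hyD : y < D) (hD : 0 < D) :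
    x / (D - x) ≤ y / (D - y) := by
  rw [div_le_div_iff₀ (by linarith) (by linarith)]
  nlinarith

lemma div_sub_lt_div_sub {x y D : ℝ} (hxy : x < y) (hyD : y < D) (hD : 0 < D) :
    x / (D - x) < y / (D - y) := by
  rw [div_lt_div_iff₀ (by linarith) (by linarith)]
  nlinarith

lemma MeasureTheory.integral_pos_of_ae_pos {α : Type*} [MeasurableSpace α] {μ : Measure α}
    [NeZero μ] {f : α → ℝ} (hf : ∀ᵐ x ∂μ, 0 < f x) (hfi : Integrable f μ) :
    0 < ∫ x, f x ∂μ := by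
  rw [integral_pos_iff_support_of_nonneg_ae (hf.mono fun _ hx => hx.le) hfi, pos_iff_ne_zero]
  intro h0
  obtain ⟨x, hpos, hx⟩ := (hf.and (measure_eq_zero_iff_ae_notMem.mp h0)).exists
  exact hx hpos.ne'

section RidgeIntegrals

variable {v r : ℝ}

lemma div_one_add_mul_le_inv (hv : 0 < v) (hr : 0 ≤ r) : r / (1 + v * r) ≤ v⁻¹ := by
  rw [div_le_iff₀ (by positivity), inv_mul_eq_div, le_div_iff₀ hv]
  linarith

lemma div_one_add_mul_sq_le_div_one_add_mul (hv : 0 < v) (hr : 0 ≤ r) :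
    r / (1 + v * r) ^ 2 ≤ r / (1 + v * r) := by
  gcongr
  nlinarith [mul_nonneg hv.le hr]

lemma sq_div_one_add_mul_sq_le (hv : 0 < v) (hr : 0 ≤ r) :
    r ^ 2 / (1 + v * r) ^ 2 ≤ r / (1 + v * r) / v := by
  rw [div_div, div_le_div_iff₀ (by positivity) (by positivity)]
  nlinarith [mul_nonneg hr (mul_nonneg hr (mul_nonneg hv.le hr))]

variable {μ : Measure ℝ} [IsFiniteMeasure μ]

lemma integrable_div_one_add_mul (hv : 0 < v) (hμ : ∀ᵐ r ∂μ, 0 ≤ r) :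
    Integrable (fun r => r / (1 + v * r)) μ := by
  refine Integrable.of_bound (Measurable.aestronglyMeasurable (by fun_prop)) v⁻¹ ?_
  filter_upwards [hμ] with r hr
  rw [Real.norm_of_nonneg (by positivity)]
  exact div_one_add_mul_le_inv hv hr

lemma integrable_div_one_add_mul_sq (hv : 0 < v) (hμ : ∀ᵐ r ∂μ, 0 ≤ r) :
    Integrable (fun r => r / (1 + v * r) ^ 2) μ := by
  refine Integrable.of_bound (Measurable.aestronglyMeasurable (by fun_prop)) v⁻¹ ?_
  filter_upwards [hμ] with r hr
  rw [Real.norm_of_nonneg (by positivity)]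
  exact (div_one_add_mul_sq_le_div_one_add_mul hv hr).trans (div_one_add_mul_le_inv hv hr)

lemma integrable_sq_div_one_add_mul_sq (hv : 0 < v) (hμ : ∀ᵐ r ∂μ, 0 ≤ r) :
    Integrable (fun r => r ^ 2 / (1 + v * r) ^ 2) μ := by
  refine Integrable.of_bound (Measurable.aestronglyMeasurable (by fun_prop)) (v⁻¹ ^ 2) ?_
  filter_upwards [hμ] with r hr
  rw [Real.norm_of_nonneg (by positivity), ← div_pow]
  exact pow_le_pow_left₀ (by positivity) (div_one_add_mul_le_inv hv hr) 2

lemma integral_sq_div_one_add_mul_sq_le (hv : 0 < v) (hμ : ∀ᵐ r ∂μ, 0 ≤ r) :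
    ∫ r, r ^ 2 / (1 + v * r) ^ 2 ∂μ ≤ (∫ r, r / (1 + v * r) ∂μ) / v := by
  rw [← integral_div]
  refine integral_mono_ae (integrable_sq_div_one_add_mul_sq hv hμ)
    ((integrable_div_one_add_mul hv hμ).div_const v) ?_
  filter_upwards [hμ] with r hr
  exact sq_div_one_add_mul_sq_le hv hr

lemma mul_integral_sq_div_one_add_mul_sq_lt {lam θ : ℝ} (hlam : 0 < lam) (hθ : 0 ≤ θ)
    (hv : 0 < v) (hμ : ∀ᵐ r ∂μ, 0 ≤ r)
    (hfix : 1 / v = lam + θ * ∫ r, r / (1 + v * r) ∂μ) :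
    θ * ∫ r, r ^ 2 / (1 + v * r) ^ 2 ∂μ < (1 / v) ^ 2 :=
  calc θ * ∫ r, r ^ 2 / (1 + v * r) ^ 2 ∂μ
      ≤ θ * ((∫ r, r / (1 + v * r) ∂μ) / v) := by
        gcongr; exact integral_sq_div_one_add_mul_sq_le hv hμ
    _ = (1 / v - lam) * (1 / v) := by
        rw [show 1 / v - lam = θ * ∫ r, r / (1 + v * r) ∂μ by linarith]; ring
    _ < (1 / v) ^ 2 := by nlinarith [one_div_pos.mpr hv]

variable [NeZero μ]

lemma integral_div_one_add_mul_sq_pos (hv : 0 < v) (hμ : ∀ᵐ r ∂μ, 0 < r) :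
    0 < ∫ r, r / (1 + v * r) ^ 2 ∂μ :=
  integral_pos_of_ae_pos (hμ.mono fun r hr => by positivity)
    (integrable_div_one_add_mul_sq hv (hμ.mono fun _ hr => hr.le))

lemma integral_sq_div_one_add_mul_sq_pos (hv : 0 < v) (hμ : ∀ᵐ r ∂μ, 0 < r) :
    0 < ∫ r, r ^ 2 / (1 + v * r) ^ 2 ∂μ :=
  integral_pos_of_ae_pos (hμ.mono fun r hr => by positivity)
    (integrable_sq_div_one_add_mul_sq hv (hμ.mono fun _ hr => hr.le))

end RidgeIntegrals

theorem subagging_bias_variance_monotone_in_bags_general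
    (a b : ℝ) (ha : 0 < a)
    (H G : Measure ℝ) [IsProbabilityMeasure H] [IsProbabilityMeasure G]
    (hHsupp : ∀ᵐ r ∂H, r ∈ Icc a b) (hGsupp : ∀ᵐ r ∂G, r ∈ Icc a b)
    (lam : ℝ) (hlam : 0 < lam)
    (v J tc : ℝ → ℝ) (tv B V : ℝ → ℝ → ℝ)
    (hv : ∀ θ : ℝ, 0 < θ →
      0 < v θ ∧ 1 / v θ = lam + θ * ∫ r, r / (1 + v θ * r) ∂H)
    (hJ : ∀ θ : ℝ, J θ = ∫ r, r ^ 2 / (1 + v θ * r) ^ 2 ∂H)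
    (htc : ∀ θ : ℝ, tc θ = ∫ r, r / (1 + v θ * r) ^ 2 ∂G)
    (htv : ∀ ϑ θ : ℝ, tv ϑ θ = ϑ * J θ / ((1 / v θ) ^ 2 - ϑ * J θ))
    (ρ2 σ2 : ℝ) (hρ2 : 0 ≤ ρ2) (hσ2 : 0 ≤ σ2)
    (hB : ∀ ϑ θ : ℝ, B ϑ θ = ρ2 * (1 + tv ϑ θ) * tc θ)
    (hV : ∀ ϑ θ : ℝ, V ϑ θ = σ2 * tv ϑ θ)
    (φ θ : ℝ) (hφ : 0 < φ) (hφθ : φ ≤ θ)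
    (BM VM : ℕ → ℝ)
    (hBM : ∀ M : ℕ, BM M = (1 / (M : ℝ)) * B θ θ + (1 - 1 / (M : ℝ)) * B φ θ)
    (hVM : ∀ M : ℕ, VM M = (1 / (M : ℝ)) * V θ θ + (1 - 1 / (M : ℝ)) * V φ θ) :
    (∀ M : ℕ, 1 ≤ M →
      B φ θ ≤ BM (M + 1) ∧ BM (M + 1) ≤ BM M
        ∧ V φ θ ≤ VM (M + 1) ∧ VM (M + 1) ≤ VM M)
    ∧ (0 < ρ2 → φ < θ → ∀ M : ℕ, 1 ≤ M →
        B φ θ < BM (M + 1) ∧ BM (M + 1) < BM M)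
    ∧ (0 < σ2 → φ < θ → ∀ M : ℕ, 1 ≤ M →
        V φ θ < VM (M + 1) ∧ VM (M + 1) < VM M)
    ∧ (∀ M : ℕ, 1 ≤ M →
        σ2 + BM (M + 1) + VM (M + 1) ≤ σ2 + BM M + VM M) := by
  have hθ : 0 < θ := hφ.trans_le hφθ
  obtain ⟨hvθ, hfix⟩ := hv θ hθ
  have hHpos : ∀ᵐ r ∂H, 0 < r := hHsupp.mono fun r hr => ha.trans_le hr.1
  have hGpos : ∀ᵐ r ∂G, 0 < r := hGsupp.mono fun r hr => ha.trans_le hr.1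
  have hJpos : 0 < J θ := hJ θ ▸ integral_sq_div_one_add_mul_sq_pos hvθ hHpos
  have htcpos : 0 < tc θ := htc θ ▸ integral_div_one_add_mul_sq_pos hvθ hGpos
  have hθJ : θ * J θ < (1 / v θ) ^ 2 :=
    hJ θ ▸ mul_integral_sq_div_one_add_mul_sq_lt hlam hθ.le hvθ (hHpos.mono fun _ hr => hr.le) hfix
  have htv_le : tv φ θ ≤ tv θ θ := by
    rw [htv, htv]; exact div_sub_le_div_sub (by gcongr) hθJ (by positivity)
  have htv_lt (h : φ < θ) : tv φ θ < tv θ θ := by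
    rw [htv, htv]; exact div_sub_lt_div_sub (by gcongr) hθJ (by positivity)
  have hB_le : B φ θ ≤ B θ θ := by rw [hB, hB]; gcongr
  have hV_le : V φ θ ≤ V θ θ := by rw [hV, hV]; gcongr
  obtain rfl : BM = bagAverage (B φ θ) (B θ θ) := funext hBM
  obtain rfl : VM = bagAverage (V φ θ) (V θ θ) := funext hVM
  refine ⟨fun M hM => ⟨le_bagAverage hB_le _, bagAverage_succ_le hB_le hM,
      le_bagAverage hV_le _, bagAverage_succ_le hV_le hM⟩, fun hρ h M hM => ?_,
    fun hσ h M hM => ?_, fun M hM => ?_⟩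
  · have hB_lt : B φ θ < B θ θ := by rw [hB, hB]; gcongr; exact htv_lt h
    exact ⟨lt_bagAverage hB_lt (by omega), bagAverage_succ_lt hB_lt hM⟩
  · have hV_lt : V φ θ < V θ θ := by rw [hV, hV]; gcongr; exact htv_lt h
    exact ⟨lt_bagAverage hV_lt (by omega), bagAverage_succ_lt hV_lt hM⟩
  · linarith [bagAverage_succ_le hB_le hM, bagAverage_succ_le hV_le hM]

/-- Improvement due to subagging: monotonicity of the asymptotic bias and variance
of the subagged ridge predictor in the number of bags. -/
theorem subagging_bias_variance_monotone_in_bags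
    (a b : ℝ) (ha : 0 < a) (hab : a ≤ b)
    (H G : Measure ℝ) [IsProbabilityMeasure H] [IsProbabilityMeasure G]
    (hHsupp : ∀ᵐ r ∂H, r ∈ Icc a b) (hGsupp : ∀ᵐ r ∂G, r ∈ Icc a b)
    (lam : ℝ) (hlam : 0 < lam)
    (v J tc : ℝ → ℝ) (tv B V : ℝ → ℝ → ℝ)
    (hv : ∀ θ : ℝ, 0 < θ →
      0 < v θ ∧ 1 / v θ = lam + θ * ∫ r, r / (1 + v θ * r) ∂H)
    (hJ : ∀ θ : ℝ, J θ = ∫ r, r ^ 2 / (1 + v θ * r) ^ 2 ∂H)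
    (htc : ∀ θ : ℝ, tc θ = ∫ r, r / (1 + v θ * r) ^ 2 ∂G)
    (htv : ∀ ϑ θ : ℝ, tv ϑ θ = ϑ * J θ / ((1 / v θ) ^ 2 - ϑ * J θ))
    (ρ2 σ2 : ℝ) (hρ2 : 0 ≤ ρ2) (hσ2 : 0 ≤ σ2)
    (hB : ∀ ϑ θ : ℝ, B ϑ θ = ρ2 * (1 + tv ϑ θ) * tc θ)
    (hV : ∀ ϑ θ : ℝ, V ϑ θ = σ2 * tv ϑ θ)
    (φ θ : ℝ) (hφ : 0 < φ) (hφθ : φ ≤ θ)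
    (BM VM : ℕ → ℝ)
    (hBM : ∀ M : ℕ, BM M = (1 / (M : ℝ)) * B θ θ + (1 - 1 / (M : ℝ)) * B φ θ)
    (hVM : ∀ M : ℕ, VM M = (1 / (M : ℝ)) * V θ θ + (1 - 1 / (M : ℝ)) * V φ θ) :
    (∀ M : ℕ, 1 ≤ M →
      B φ θ ≤ BM (M + 1) ∧ BM (M + 1) ≤ BM M
        ∧ V φ θ ≤ VM (M + 1) ∧ VM (M + 1) ≤ VM M)
    ∧ (0 < ρ2 → φ < θ → ∀ M : ℕ, 1 ≤ M →
        B φ θ < BM (M + 1) ∧ BM (M + 1) < BM M)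
    ∧ (0 < σ2 → φ < θ → ∀ M : ℕ, 1 ≤ M →
        V φ θ < VM (M + 1) ∧ VM (M + 1) < VM M)
    ∧ (∀ M : ℕ, 1 ≤ M →
        σ2 + BM (M + 1) + VM (M + 1) ≤ σ2 + BM M + VM M) :=
  subagging_bias_variance_monotone_in_bags_general a b ha H G hHsupp hGsupp lam hlam v J tc tv B V
    hv hJ htc htv ρ2 σ2 hρ2 hσ2 hB hV φ θ hφ hφθ BM VM hBM hVM
end

section
/- In the ridge fixed-point setting with λ > 0, fix φ ∈ (0, ∞) and ρ², σ² ≥ 0. For M ∈ ℕ and θ ∈ [φ, ∞), define the limiting subagging (with replacement) risk R^{sub}_M(θ) = σ² + (1/M)(B(θ,θ) + V(θ,θ)) + (1 − 1/M)(B(φ,θ) + V(φ,θ)), and the limiting splagging (data-splitting, without replacement) risk R^{spl}_M(θ) = σ² + (1/M′)(B(θ,θ) + V(θ,θ)) + (1 − 1/M′)·ρ² tc(θ), where M′ = min(M, ⌊θ/φ⌋). Then inf_{M ∈ ℕ, θ ∈ [φ,∞)} R^{sub}_M(θ) ≤ inf_{M ∈ ℕ, θ ∈ [φ,∞)} R^{spl}_M(θ).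 (Optimal subagging is at least as good as optimal splagging in terms of the limiting squared prediction risk of ridge predictors.) -/
open MeasureTheory Set Filter Topology

/-! As `M → ∞` the subagging risk decreases to `σ² + B(φ, θ) + V(φ, θ)`. This limit already beats
splagging with `M' = min(M, ⌊θ/φ⌋)` pieces: the gap is
`(ρ² tc(θ) + σ²)(tv(θ, θ) - M' tv(φ, θ)) / M'`, which is nonnegative because `x ↦ x / (c - x)` is
superlinear on `[0, c)` and the fixed-point equation with `λ > 0` forces `θ J(θ) < v(θ)⁻²`. -/

theorem mul_div_sub_le_div_sub {s t c m : ℝ} (hs : 0 ≤ s) (hm : 1 ≤ m) (hst : m * s ≤ t)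
    (htc : t < c) : m * (s / (c - s)) ≤ t / (c - t) := by
  have hms : s ≤ m * s := le_mul_of_one_le_left hs hm
  have hcms : 0 < c - m * s := by linarith
  calc m * (s / (c - s)) = m * s / (c - s) := (mul_div_assoc _ _ _).symm
    _ ≤ m * s / (c - m * s) := div_le_div_of_nonneg_left (by positivity) hcms (by linarith)
    _ ≤ t / (c - t) := by
      rw [div_le_div_iff₀ hcms (by linarith)]
      nlinarith

section FixedPoint

variable {H : Measure ℝ} {w : ℝ}

theorem div_one_add_mul_le_one_div {r : ℝ} (hr : 0 ≤ r) (hw : 0 < w) :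
    r / (1 + w * r) ≤ 1 / w := by
  rw [div_le_div_iff₀ (by positivity) hw]
  linarith

theorem integral_sq_div_one_add_mul_sq_le_s12 [IsFiniteMeasure H] (hH : ∀ᵐ r ∂H, 0 ≤ r)
    (hw : 0 < w) :
    ∫ r, r ^ 2 / (1 + w * r) ^ 2 ∂H ≤ 1 / w * ∫ r, r / (1 + w * r) ∂H := by
  rw [← integral_const_mul]
  refine integral_mono_of_nonneg (ae_of_all _ fun r => by positivity) ?_ ?_
  · refine Integrable.of_bound (by fun_prop : Measurable _).aestronglyMeasurable
      (1 / w * (1 / w)) ?_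
    filter_upwards [hH] with r hr
    rw [Real.norm_of_nonneg (by positivity)]
    exact mul_le_mul_of_nonneg_left (div_one_add_mul_le_one_div hr hw) (by positivity)
  · filter_upwards [hH] with r hr
    calc r ^ 2 / (1 + w * r) ^ 2
        = r / (1 + w * r) * (r / (1 + w * r)) := by rw [div_mul_div_comm, ← sq, ← sq]
      _ ≤ 1 / w * (r / (1 + w * r)) :=
        mul_le_mul_of_nonneg_right (div_one_add_mul_le_one_div hr hw) (by positivity)

theorem mul_integral_sq_div_lt_of_fixedPoint [IsFiniteMeasure H] (hH : ∀ᵐ r ∂H, 0 ≤ r)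
    (hw : 0 < w) {lam θ : ℝ} (hlam : 0 < lam) (hθ : 0 ≤ θ)
    (hfix : 1 / w = lam + θ * ∫ r, r / (1 + w * r) ∂H) :
    θ * ∫ r, r ^ 2 / (1 + w * r) ^ 2 ∂H < (1 / w) ^ 2 := by
  have hθI : θ * ∫ r, r / (1 + w * r) ∂H = 1 / w - lam := by linarith
  have hlam' : 0 < 1 / w * lam := by positivity
  calc θ * ∫ r, r ^ 2 / (1 + w * r) ^ 2 ∂H
      ≤ θ * (1 / w * ∫ r, r / (1 + w * r) ∂H) :=
        mul_le_mul_of_nonneg_left (integral_sq_div_one_add_mul_sq_le_s12 hH hw) hθ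
    _ = (1 / w) ^ 2 - 1 / w * lam := by rw [mul_left_comm, hθI]; ring
    _ < (1 / w) ^ 2 := by linarith

theorem tv_nonneg_and_mul_le [IsFiniteMeasure H] (hH : ∀ᵐ r ∂H, 0 ≤ r) {lam : ℝ}
    (hlam : 0 < lam) {v J : ℝ → ℝ} {tv : ℝ → ℝ → ℝ}
    (hv : ∀ θ : ℝ, 0 < θ → 0 < v θ ∧ 1 / v θ = lam + θ * ∫ r, r / (1 + v θ * r) ∂H)
    (hJ : ∀ θ : ℝ, J θ = ∫ r, r ^ 2 / (1 + v θ * r) ^ 2 ∂H)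
    (htv : ∀ ϑ θ : ℝ, tv ϑ θ = ϑ * J θ / ((1 / v θ) ^ 2 - ϑ * J θ))
    {φ θ m : ℝ} (hφ : 0 < φ) (hm : 1 ≤ m) (hmθ : m * φ ≤ θ) :
    0 ≤ tv φ θ ∧ m * tv φ θ ≤ tv θ θ := by
  have hθ : 0 < θ := by nlinarith
  obtain ⟨hv0, hfix⟩ := hv θ hθ
  have hJ0 : 0 ≤ J θ := hJ θ ▸ integral_nonneg fun r => by positivity
  have hθJ : θ * J θ < (1 / v θ) ^ 2 :=
    hJ θ ▸ mul_integral_sq_div_lt_of_fixedPoint hH hv0 hlam hθ.le hfix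
  have hmφJ : m * (φ * J θ) ≤ θ * J θ := by
    rw [← mul_assoc]
    exact mul_le_mul_of_nonneg_right hmθ hJ0
  have hφJ : φ * J θ ≤ θ * J θ := (le_mul_of_one_le_left (mul_nonneg hφ.le hJ0) hm).trans hmφJ
  rw [htv, htv]
  exact ⟨div_nonneg (mul_nonneg hφ.le hJ0) (by linarith),
    mul_div_sub_le_div_sub (mul_nonneg hφ.le hJ0) hm hmφJ hθJ⟩

end FixedPoint

theorem tendsto_subagging_risk (σ2 X Y : ℝ) :
    Tendsto (fun M : ℕ => σ2 + 1 / (M : ℝ) * X + (1 - 1 / (M : ℝ)) * Y) atTop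
      (𝓝 (σ2 + Y)) := by
  have h := ((tendsto_one_div_atTop_nhds_zero_nat (𝕜 := ℝ)).mul_const (X - Y)).const_add (σ2 + Y)
  rw [zero_mul, add_zero] at h
  exact h.congr fun M => by ring

theorem subagging_risk_nonneg {ρ2 σ2 t p q M : ℝ} (hρ2 : 0 ≤ ρ2) (hσ2 : 0 ≤ σ2) (ht : 0 ≤ t)
    (hp : 0 ≤ p) (hpq : p ≤ q) (hM : 1 ≤ M) :
    0 ≤ σ2 + 1 / M * (ρ2 * (1 + q) * t + σ2 * q) + (1 - 1 / M) * (ρ2 * (1 + p) * t + σ2 * p) := by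
  have hM' : 1 / M ≤ 1 := (div_le_one (by positivity)).2 hM
  have hX : 0 ≤ ρ2 * (1 + q) * t + σ2 * q :=
    add_nonneg (mul_nonneg (mul_nonneg hρ2 (by linarith)) ht) (mul_nonneg hσ2 (hp.trans hpq))
  have hY : 0 ≤ ρ2 * (1 + p) * t + σ2 * p :=
    add_nonneg (mul_nonneg (mul_nonneg hρ2 (by linarith)) ht) (mul_nonneg hσ2 hp)
  have : 0 ≤ 1 / M * (ρ2 * (1 + q) * t + σ2 * q) := mul_nonneg (by positivity) hX
  have : 0 ≤ (1 - 1 / M) * (ρ2 * (1 + p) * t + σ2 * p) := mul_nonneg (by linarith) hY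
  linarith

theorem one_le_min_floor_div {M : ℕ} {φ θ : ℝ} (hM : 1 ≤ M) (hφ : 0 < φ) (hθ : φ ≤ θ) :
    (1 : ℝ) ≤ (min M ⌊θ / φ⌋₊ : ℕ) := by
  exact_mod_cast le_min hM (Nat.one_le_floor_iff _ |>.2 ((one_le_div hφ).2 hθ))

theorem min_floor_div_mul_le (M : ℕ) {φ θ : ℝ} (hφ : 0 < φ) (hθ : 0 ≤ θ) :
    ((min M ⌊θ / φ⌋₊ : ℕ) : ℝ) * φ ≤ θ :=
  (le_div_iff₀ hφ).1 ((Nat.cast_le.2 (min_le_right _ _)).trans (Nat.floor_le (by positivity)))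

/-- With `p = tv(φ, θ)`, `q = tv(θ, θ)`, `t = tc(θ)`, the right side is the splagging risk with
`m` pieces. -/
theorem subagging_limit_le_splagging_risk {ρ2 σ2 t p q m : ℝ} (hs : 0 ≤ ρ2 * t + σ2) (hm : 0 < m)
    (hpq : m * p ≤ q) :
    σ2 + (ρ2 * (1 + p) * t + σ2 * p)
      ≤ σ2 + 1 / m * (ρ2 * (1 + q) * t + σ2 * q) + (1 - 1 / m) * (ρ2 * t) := by
  have gap : σ2 + 1 / m * (ρ2 * (1 + q) * t + σ2 * q) + (1 - 1 / m) * (ρ2 * t)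
      - (σ2 + (ρ2 * (1 + p) * t + σ2 * p)) = 1 / m * ((ρ2 * t + σ2) * (q - m * p)) := by
    field_simp
    ring
  have : 0 ≤ 1 / m * ((ρ2 * t + σ2) * (q - m * p)) :=
    mul_nonneg (by positivity) (mul_nonneg hs (by linarith))
  linarith

theorem optimal_subagging_beats_optimal_splagging_general
    (a b : ℝ) (ha : 0 < a)
    (H G : Measure ℝ) [IsProbabilityMeasure H] [IsProbabilityMeasure G]
    (hHsupp : ∀ᵐ r ∂H, r ∈ Icc a b) (hGsupp : ∀ᵐ r ∂G, r ∈ Icc a b)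
    (lam : ℝ) (hlam : 0 < lam)
    (v J tc : ℝ → ℝ) (tv B V : ℝ → ℝ → ℝ)
    (hv : ∀ θ : ℝ, 0 < θ →
      0 < v θ ∧ 1 / v θ = lam + θ * ∫ r, r / (1 + v θ * r) ∂H)
    (hJ : ∀ θ : ℝ, J θ = ∫ r, r ^ 2 / (1 + v θ * r) ^ 2 ∂H)
    (htc : ∀ θ : ℝ, tc θ = ∫ r, r / (1 + v θ * r) ^ 2 ∂G)
    (htv : ∀ ϑ θ : ℝ, tv ϑ θ = ϑ * J θ / ((1 / v θ) ^ 2 - ϑ * J θ))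
    (ρ2 σ2 : ℝ) (hρ2 : 0 ≤ ρ2) (hσ2 : 0 ≤ σ2)
    (hB : ∀ ϑ θ : ℝ, B ϑ θ = ρ2 * (1 + tv ϑ θ) * tc θ)
    (hV : ∀ ϑ θ : ℝ, V ϑ θ = σ2 * tv ϑ θ)
    (φ : ℝ) (hφ : 0 < φ)
    (Rsub Rspl : ℕ → ℝ → ℝ)
    (hRsub : ∀ (M : ℕ) (θ : ℝ), Rsub M θ =
      σ2 + (1 / (M : ℝ)) * (B θ θ + V θ θ)
        + (1 - 1 / (M : ℝ)) * (B φ θ + V φ θ))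
    (hRspl : ∀ (M : ℕ) (θ : ℝ), Rspl M θ =
      σ2 + (1 / ((min M ⌊θ / φ⌋₊ : ℕ) : ℝ)) * (B θ θ + V θ θ)
        + (1 - 1 / ((min M ⌊θ / φ⌋₊ : ℕ) : ℝ)) * (ρ2 * tc θ)) :
    sInf {x : ℝ | ∃ M : ℕ, 1 ≤ M ∧ ∃ θ : ℝ, φ ≤ θ ∧ x = Rsub M θ}
      ≤ sInf {x : ℝ | ∃ M : ℕ, 1 ≤ M ∧ ∃ θ : ℝ, φ ≤ θ ∧ x = Rspl M θ} := by
  have hHnonneg : ∀ᵐ r ∂H, 0 ≤ r := hHsupp.mono fun r hr => ha.le.trans hr.1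
  have htc0 : ∀ θ, 0 ≤ tc θ := fun θ => htc θ ▸ integral_nonneg_of_ae <|
    hGsupp.mono fun r hr => by have : 0 ≤ r := ha.le.trans hr.1; positivity
  have htv_le : ∀ {m θ : ℝ}, 1 ≤ m → m * φ ≤ θ → 0 ≤ tv φ θ ∧ m * tv φ θ ≤ tv θ θ :=
    tv_nonneg_and_mul_le hHnonneg hlam hv hJ htv hφ
  set S := {x : ℝ | ∃ M : ℕ, 1 ≤ M ∧ ∃ θ : ℝ, φ ≤ θ ∧ x = Rsub M θ}
  have hS : BddBelow S := by
    refine ⟨0, ?_⟩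
    rintro _ ⟨M, hM, θ, hθ, rfl⟩
    obtain ⟨hp, hpq⟩ := htv_le le_rfl ((one_mul φ).trans_le hθ)
    rw [hRsub, hB, hB, hV, hV]
    exact subagging_risk_nonneg hρ2 hσ2 (htc0 θ) hp ((one_mul _).symm.trans_le hpq)
      (by exact_mod_cast hM)
  refine le_csInf ⟨Rspl 1 φ, 1, le_rfl, φ, le_rfl, rfl⟩ ?_
  rintro _ ⟨M, hM, θ, hθ, rfl⟩
  calc sInf S ≤ σ2 + (B φ θ + V φ θ) :=
        ge_of_tendsto (tendsto_subagging_risk σ2 (B θ θ + V θ θ) (B φ θ + V φ θ))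
          ((eventually_ge_atTop 1).mono fun M hM =>
            (csInf_le hS ⟨M, hM, θ, hθ, rfl⟩).trans_eq (hRsub M θ))
    _ ≤ Rspl M θ := by
        rw [hRspl, hB, hB, hV, hV]
        exact subagging_limit_le_splagging_risk (add_nonneg (mul_nonneg hρ2 (htc0 θ)) hσ2)
          (by linarith [one_le_min_floor_div hM hφ hθ])
          (htv_le (one_le_min_floor_div hM hφ hθ) (min_floor_div_mul_le M hφ (hφ.le.trans hθ))).2

/-- Optimal subagging is at least as good as optimal splagging in terms of the
limiting squared prediction risk of ridge predictors. -/
theorem optimal_subagging_beats_optimal_splagging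
    (a b : ℝ) (ha : 0 < a) (hab : a ≤ b)
    (H G : Measure ℝ) [IsProbabilityMeasure H] [IsProbabilityMeasure G]
    (hHsupp : ∀ᵐ r ∂H, r ∈ Icc a b) (hGsupp : ∀ᵐ r ∂G, r ∈ Icc a b)
    (lam : ℝ) (hlam : 0 < lam)
    (v J tc : ℝ → ℝ) (tv B V : ℝ → ℝ → ℝ)
    (hv : ∀ θ : ℝ, 0 < θ →
      0 < v θ ∧ 1 / v θ = lam + θ * ∫ r, r / (1 + v θ * r) ∂H)
    (hJ : ∀ θ : ℝ, J θ = ∫ r, r ^ 2 / (1 + v θ * r) ^ 2 ∂H)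
    (htc : ∀ θ : ℝ, tc θ = ∫ r, r / (1 + v θ * r) ^ 2 ∂G)
    (htv : ∀ ϑ θ : ℝ, tv ϑ θ = ϑ * J θ / ((1 / v θ) ^ 2 - ϑ * J θ))
    (ρ2 σ2 : ℝ) (hρ2 : 0 ≤ ρ2) (hσ2 : 0 ≤ σ2)
    (hB : ∀ ϑ θ : ℝ, B ϑ θ = ρ2 * (1 + tv ϑ θ) * tc θ)
    (hV : ∀ ϑ θ : ℝ, V ϑ θ = σ2 * tv ϑ θ)
    (φ : ℝ) (hφ : 0 < φ)
    (Rsub Rspl : ℕ → ℝ → ℝ)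
    (hRsub : ∀ (M : ℕ) (θ : ℝ), Rsub M θ =
      σ2 + (1 / (M : ℝ)) * (B θ θ + V θ θ)
        + (1 - 1 / (M : ℝ)) * (B φ θ + V φ θ))
    (hRspl : ∀ (M : ℕ) (θ : ℝ), Rspl M θ =
      σ2 + (1 / ((min M ⌊θ / φ⌋₊ : ℕ) : ℝ)) * (B θ θ + V θ θ)
        + (1 - 1 / ((min M ⌊θ / φ⌋₊ : ℕ) : ℝ)) * (ρ2 * tc θ)) :
    sInf {x : ℝ | ∃ M : ℕ, 1 ≤ M ∧ ∃ θ : ℝ, φ ≤ θ ∧ x = Rsub M θ}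
      ≤ sInf {x : ℝ | ∃ M : ℕ, 1 ≤ M ∧ ∃ θ : ℝ, φ ≤ θ ∧ x = Rspl M θ} :=
  optimal_subagging_beats_optimal_splagging_general a b ha H G hHsupp hGsupp lam hlam v J tc tv B V
    hv hJ htc htv ρ2 σ2 hρ2 hσ2 hB hV φ hφ Rsub Rspl hRsub hRspl
end

section
/- In the ridgeless fixed-point setting, fix φ ∈ (0, ∞) and ρ² > 0, σ² > 0. Define R on [φ, ∞) \ {1} by R(θ) = σ² + σ² φ/(1 − φ) for θ ∈ [φ, 1) (this branch occurs only when φ < 1), and R(θ) = σ² + ρ² (1 + tv₀(φ, θ)) tc₀(θ) + σ² tv₀(φ, θ) for θ ∈ (1, ∞). Then there exists θ* ∈ (1, ∞) with θ* ≥ φ such that R(θ*) ≤ R(θ) for all θ ∈ [φ, ∞) \ {1}, and moreover R(θ*) ≤ σ² + ρ² ∫ r dG(r) (the null risk, which is the limiting value of R(θ) as θ → ∞). (With positive signal-to-noise ratio, the globally optimal subsample aspect ratio for subagged ridgeless predictors with infinitely many bags always lies in the overparameterized regime (1, ∞).) -/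
open MeasureTheory Set Filter

/-! ### Auxiliary definitions: integral transforms of the spectral measures -/

noncomputable def Lfun (μ : Measure ℝ) (s : ℝ) : ℝ := ∫ r, r / (s + r) ∂μ
noncomputable def Kfun (μ : Measure ℝ) (s : ℝ) : ℝ := ∫ r, r ^ 2 / (s + r) ^ 2 ∂μ
noncomputable def Tfun (μ : Measure ℝ) (s : ℝ) : ℝ := ∫ r, r / (s + r) ^ 2 ∂μ
noncomputable def Ffun (H G : Measure ℝ) (φ ρ2 σ2 s : ℝ) : ℝ :=
  σ2 + ρ2 * (1 + φ * Kfun H s / (1 - φ * Kfun H s)) * (s ^ 2 * Tfun G s)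
    + σ2 * (φ * Kfun H s / (1 - φ * Kfun H s))

/-! ### Generic integral bounds on probability measures -/

lemma prob_int_bounds' {μ : Measure ℝ} [IsProbabilityMeasure μ] {a b : ℝ}
    (hsupp : ∀ᵐ r ∂μ, r ∈ Icc a b) {f : ℝ → ℝ} (hfm : AEStronglyMeasurable f μ)
    {c C : ℝ} (hb : ∀ r ∈ Icc a b, c ≤ f r ∧ f r ≤ C) :
    Integrable f μ ∧ c ≤ ∫ r, f r ∂μ ∧ ∫ r, f r ∂μ ≤ C := by
  have hint : Integrable f μ := by
    refine (integrable_const (max |c| |C|)).mono' hfm ?_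
    filter_upwards [hsupp] with r hr
    simpa using abs_le_max_abs_abs (hb r hr).1 (hb r hr).2
  refine ⟨hint, ?_, ?_⟩
  · have := integral_mono_ae (integrable_const c) hint
      (by filter_upwards [hsupp] with r hr using (hb r hr).1)
    simpa using this
  · have := integral_mono_ae hint (integrable_const C)
      (by filter_upwards [hsupp] with r hr using (hb r hr).2)
    simpa using this

set_option maxHeartbeats 1000000 in
lemma fixed_point_unique {H : Measure ℝ} [IsProbabilityMeasure H] {a b : ℝ}
    (ha : 0 < a) (hab : a ≤ b) (hsupp : ∀ᵐ r ∂H, r ∈ Icc a b) {θ x y : ℝ} (hθ : 0 < θ)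
    (hx : 0 < x) (hy : 0 < y)
    (hex : 1/x = θ * ∫ r, r/(1+x*r) ∂H) (hey : 1/y = θ * ∫ r, r/(1+y*r) ∂H) : x = y := by
  have hb : 0 < b := lt_of_lt_of_le ha hab
  have key : ∀ u v : ℝ, 0 < u → 0 < v → u < v →
      1/u = θ * ∫ r, r/(1+u*r) ∂H → 1/v = θ * ∫ r, r/(1+v*r) ∂H → False := by
    intro u v hu hv huv hequ heqv
    have hmu : AEStronglyMeasurable (fun r : ℝ => u*r/(1+u*r)) H :=
      (by fun_prop : Measurable fun r : ℝ => u*r/(1+u*r)).aestronglyMeasurable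
    have hmv : AEStronglyMeasurable (fun r : ℝ => v*r/(1+v*r)) H :=
      (by fun_prop : Measurable fun r : ℝ => v*r/(1+v*r)).aestronglyMeasurable
    have hpbu : ∀ w : ℝ, 0 < w → ∀ r ∈ Icc a b, (0:ℝ) ≤ w*r/(1+w*r) ∧ w*r/(1+w*r) ≤ 1 := by
      intro w hw r hr
      have hr1 := hr.1; have hr2 := hr.2
      have hrp : (0:ℝ) < r := by linarith
      have h3 : (0:ℝ) < 1 + w*r := by nlinarith
      constructor
      · positivity
      · rw [div_le_one h3]; nlinarith
    have hbu := prob_int_bounds' hsupp hmu (hpbu u hu)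
    have hbv := prob_int_bounds' hsupp hmv (hpbu v hv)
    have hmd : AEStronglyMeasurable (fun r : ℝ => v*r/(1+v*r) - u*r/(1+u*r)) H :=
      hmv.sub hmu
    have hpbd : ∀ r ∈ Icc a b, a*(v-u)/((1+u*b)*(1+v*b)) ≤ v*r/(1+v*r) - u*r/(1+u*r)
        ∧ v*r/(1+v*r) - u*r/(1+u*r) ≤ 1 := by
      intro r hr
      have hr1 := hr.1; have hr2 := hr.2
      have hrp : (0:ℝ) < r := by linarith
      have h3 : (0:ℝ) < 1 + u*r := by nlinarith
      have h4 : (0:ℝ) < 1 + v*r := by nlinarith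
      have hid : v*r/(1+v*r) - u*r/(1+u*r) = r*(v-u)/((1+u*r)*(1+v*r)) := by
        field_simp; ring
      constructor
      · rw [hid]
        have e1 : 1 + u*r ≤ 1 + u*b := by nlinarith [mul_le_mul_of_nonneg_left hr2 hu.le]
        have e2 : 1 + v*r ≤ 1 + v*b := by nlinarith [mul_le_mul_of_nonneg_left hr2 hv.le]
        have e3 : (1+u*r)*(1+v*r) ≤ (1+u*b)*(1+v*b) :=
          mul_le_mul e1 e2 h4.le (by nlinarith)
        have e4 : a*(v-u) ≤ r*(v-u) := mul_le_mul_of_nonneg_right hr1 (by linarith)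
        exact div_le_div₀ (by nlinarith) e4 (by positivity) e3
      · have h6 : v*r/(1+v*r) ≤ 1 := by rw [div_le_one h4]; nlinarith
        have h7 : (0:ℝ) ≤ u*r/(1+u*r) := by positivity
        linarith
    have hdiff := prob_int_bounds' hsupp hmd hpbd
    have heq' : ∀ w : ℝ, 0 < w → (1/w = θ * ∫ r, r/(1+w*r) ∂H) →
        ∫ r, w*r/(1+w*r) ∂H = 1/θ := by
      intro w hw heq
      have h1 : ∫ r, w*r/(1+w*r) ∂H = w * ∫ r, r/(1+w*r) ∂H := by
        simp_rw [mul_div_assoc]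
        exact integral_const_mul w _
      have h2 : θ * (w * ∫ r, r/(1+w*r) ∂H) = 1 := by
        rw [show θ*(w*∫ r, r/(1+w*r) ∂H) = w*(θ*∫ r, r/(1+w*r) ∂H) by ring, ← heq]
        field_simp
      rw [h1, eq_div_iff (ne_of_gt hθ)]
      linear_combination h2
    have heu' := heq' u hu hequ
    have hev' := heq' v hv heqv
    have hsub : ∫ r, (v*r/(1+v*r) - u*r/(1+u*r)) ∂H
        = (∫ r, v*r/(1+v*r) ∂H) - ∫ r, u*r/(1+u*r) ∂H := integral_sub hbv.1 hbu.1
    have hpos : 0 < a*(v-u)/((1+u*b)*(1+v*b)) := by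
      have h8 : (0:ℝ) < 1 + u*b := by nlinarith
      have h9 : (0:ℝ) < 1 + v*b := by nlinarith
      apply div_pos (by nlinarith) (by positivity)
    have hfin := hdiff.2.1
    rw [hsub, hev', heu'] at hfin
    linarith
  rcases lt_trichotomy x y with h | h | h
  · exact absurd (key x y hx hy h hex hey) (by simp)
  · exact h
  · exact absurd (key y x hy hx h hey hex) (by simp)

/-! ### Bounds on the integral transforms -/

section Bounds
variable {μ : Measure ℝ} [IsProbabilityMeasure μ] {a b : ℝ}
  (ha : 0 < a) (hab : a ≤ b) (hsupp : ∀ᵐ r ∂μ, r ∈ Icc a b)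

include ha hab hsupp

lemma Lfun_bounds {s : ℝ} (hs : 0 < s) :
    Integrable (fun r : ℝ => r / (s + r)) μ ∧ a/(s+b) ≤ Lfun μ s ∧ Lfun μ s ≤ b/(s+b) := by
  refine prob_int_bounds' hsupp ((by fun_prop : Measurable fun r : ℝ => r/(s+r)).aestronglyMeasurable) ?_
  intro r hr
  obtain ⟨h1, h2⟩ := hr
  constructor
  · exact div_le_div₀ (by linarith) h1 (by linarith) (by linarith)
  · rw [div_le_div_iff₀ (by linarith) (by linarith)]
    nlinarith [mul_le_mul_of_nonneg_right h2 hs.le]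

lemma Kfun_bounds1 {s : ℝ} (hs : 0 < s) :
    Integrable (fun r : ℝ => r^2/(s+r)^2) μ ∧ a^2/(s+b)^2 ≤ Kfun μ s ∧ Kfun μ s ≤ b^2/(s+b)^2 := by
  refine prob_int_bounds' hsupp ((by fun_prop : Measurable fun r : ℝ => r^2/(s+r)^2).aestronglyMeasurable) ?_
  intro r hr
  obtain ⟨h1, h2⟩ := hr
  constructor
  · rw [div_le_div_iff₀ (pow_pos (by linarith) 2) (pow_pos (by linarith) 2)]
    have e : a*(s+r) ≤ r*(s+b) := by nlinarith
    nlinarith [mul_le_mul e e (by nlinarith) (by nlinarith)]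
  · rw [div_le_div_iff₀ (pow_pos (by linarith) 2) (pow_pos (by linarith) 2)]
    have e : r*(s+b) ≤ b*(s+r) := by nlinarith
    nlinarith [mul_le_mul e e (by nlinarith) (by nlinarith)]

lemma Kfun_bounds2 {s : ℝ} (hs : 0 < s) :
    1 - s*(s+2*b)/a^2 ≤ Kfun μ s ∧ Kfun μ s ≤ 1 - s*(s+2*a)/(s+b)^2 := by
  have h := prob_int_bounds' (μ := μ) hsupp
    ((by fun_prop : Measurable fun r : ℝ => r^2/(s+r)^2).aestronglyMeasurable)
    (c := 1 - s*(s+2*b)/a^2) (C := 1 - s*(s+2*a)/(s+b)^2) ?_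
  · exact ⟨h.2.1, h.2.2⟩
  intro r hr
  obtain ⟨h1, h2⟩ := hr
  have hne : r^2/(s+r)^2 = 1 - s*(s+2*r)/(s+r)^2 := by
    have : s + r ≠ 0 := ne_of_gt (by linarith)
    field_simp
    ring
  rw [hne]
  constructor
  · have : s*(s+2*r)/(s+r)^2 ≤ s*(s+2*b)/a^2 := by gcongr <;> nlinarith
    linarith
  · have : s*(s+2*a)/(s+b)^2 ≤ s*(s+2*r)/(s+r)^2 := by gcongr <;> nlinarith
    linarith

lemma Kfun_le_Lfun {s : ℝ} (hs : 0 < s) : Kfun μ s ≤ b/(s+b) * Lfun μ s := by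
  have hKi := (Kfun_bounds1 ha hab hsupp hs).1
  have hLi := (Lfun_bounds ha hab hsupp hs).1
  have h := integral_mono_ae hKi (hLi.const_mul (b/(s+b))) ?_
  · rw [integral_const_mul] at h
    exact h
  filter_upwards [hsupp] with r hr
  obtain ⟨h1, h2⟩ := hr
  show r^2/(s+r)^2 ≤ b/(s+b) * (r/(s+r))
  rw [div_mul_div_comm, div_le_div_iff₀ (pow_pos (by linarith) 2) (mul_pos (by linarith) (by linarith))]
  nlinarith [mul_le_mul_of_nonneg_right h2 hs.le, mul_pos (show (0:ℝ) < r by linarith) hs]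

lemma Tfun_bounds {s : ℝ} (hs : 0 < s) :
    Integrable (fun r : ℝ => r/(s+r)^2) μ ∧ 0 ≤ Tfun μ s ∧ Tfun μ s ≤ b/a^2 := by
  refine prob_int_bounds' hsupp ((by fun_prop : Measurable fun r : ℝ => r/(s+r)^2).aestronglyMeasurable) ?_
  intro r hr
  obtain ⟨h1, h2⟩ := hr
  constructor
  · exact div_nonneg (by linarith) (by positivity)
  · exact div_le_div₀ (by linarith) h2 (by positivity) (by nlinarith)

lemma id_bounds : Integrable (fun r : ℝ => r) μ ∧ a ≤ ∫ r, r ∂μ ∧ ∫ r, r ∂μ ≤ b :=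
  prob_int_bounds' hsupp measurable_id.aestronglyMeasurable (fun r hr => ⟨hr.1, hr.2⟩)

lemma Mtc_bounds {s : ℝ} (hs : 0 < s) :
    2*s*a^2/(s+b)^2 ≤ (∫ r, r ∂μ) - s^2 * Tfun μ s ∧
      (∫ r, r ∂μ) - s^2 * Tfun μ s ≤ b^2*(2*s+b)/s^2 := by
  have hTi := (Tfun_bounds ha hab hsupp hs).1
  have hIi := (id_bounds ha hab hsupp).1
  have hrw : (∫ r, r ∂μ) - s^2 * Tfun μ s = ∫ r, (r - s^2*(r/(s+r)^2)) ∂μ := by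
    rw [integral_sub hIi (hTi.const_mul (s^2)), integral_const_mul]
    rfl
  rw [hrw]
  have h := prob_int_bounds' (μ := μ) hsupp
    ((by fun_prop : Measurable fun r : ℝ => r - s^2*(r/(s+r)^2)).aestronglyMeasurable)
    (c := 2*s*a^2/(s+b)^2) (C := b^2*(2*s+b)/s^2) ?_
  · exact ⟨h.2.1, h.2.2⟩
  intro r hr
  obtain ⟨h1, h2⟩ := hr
  have hr0 : (0:ℝ) < r := by linarith
  have hid : r - s^2*(r/(s+r)^2) = r^2*(2*s+r)/(s+r)^2 := by
    have : s + r ≠ 0 := ne_of_gt (by linarith)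
    field_simp
    ring
  rw [hid]
  constructor
  · have haa : a^2 ≤ r^2 := by nlinarith
    apply div_le_div₀ ?_ ?_ (pow_pos (by linarith) 2) (by nlinarith)
    · positivity
    · nlinarith [mul_le_mul_of_nonneg_left haa (show (0:ℝ) ≤ 2*s by linarith), pow_pos hr0 3]
  · gcongr <;> nlinarith

lemma den_lb {φ s : ℝ} (hφ : 0 < φ) (hs : 0 < s) (hφL : φ * Lfun μ s ≤ 1) :
    s/(s+b) ≤ 1 - φ * Kfun μ s := by
  have hb : 0 < b := lt_of_lt_of_le ha hab
  have h1 : φ * Kfun μ s ≤ b/(s+b) * (φ * Lfun μ s) := by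
    have := mul_le_mul_of_nonneg_left (Kfun_le_Lfun ha hab hsupp hs) hφ.le
    nlinarith [this]
  have h2 : b/(s+b) * (φ * Lfun μ s) ≤ b/(s+b) := by
    nlinarith [mul_le_mul_of_nonneg_left hφL (show (0:ℝ) ≤ b/(s+b) by positivity)]
  have h3 : s/(s+b) = 1 - b/(s+b) := by
    field_simp
    ring
  linarith

lemma int_eq_L {s : ℝ} (hs : 0 < s) : ∫ r, r/(1+(1/s)*r) ∂μ = s * Lfun μ s := by
  rw [Lfun, ← integral_const_mul]
  apply integral_congr_ae
  filter_upwards [hsupp] with r hr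
  have h1 : (0:ℝ) < r := lt_of_lt_of_le ha hr.1
  have hne1 : s + r ≠ 0 := ne_of_gt (by linarith)
  have hne2 : s ≠ 0 := ne_of_gt hs
  field_simp

lemma int_eq_K {s : ℝ} (hs : 0 < s) : ∫ r, r^2/(1+(1/s)*r)^2 ∂μ = s^2 * Kfun μ s := by
  rw [Kfun, ← integral_const_mul]
  apply integral_congr_ae
  filter_upwards [hsupp] with r hr
  have h1 : (0:ℝ) < r := lt_of_lt_of_le ha hr.1
  have hne1 : s + r ≠ 0 := ne_of_gt (by linarith)
  have hne2 : s ≠ 0 := ne_of_gt hs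
  field_simp

lemma int_eq_T {s : ℝ} (hs : 0 < s) : ∫ r, r/(1+(1/s)*r)^2 ∂μ = s^2 * Tfun μ s := by
  rw [Tfun, ← integral_const_mul]
  apply integral_congr_ae
  filter_upwards [hsupp] with r hr
  have h1 : (0:ℝ) < r := lt_of_lt_of_le ha hr.1
  have hne1 : s + r ≠ 0 := ne_of_gt (by linarith)
  have hne2 : s ≠ 0 := ne_of_gt hs
  field_simp

end Bounds

/-! ### Continuity of the integral transforms -/

lemma contOn_param_integral {μ : Measure ℝ} [IsProbabilityMeasure μ] {a b : ℝ}
    (hsupp : ∀ᵐ r ∂μ, r ∈ Icc a b) (g : ℝ → ℝ → ℝ) {C : ℝ}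
    (hmeas : ∀ s, 0 < s → AEStronglyMeasurable (g s) μ)
    (hbound : ∀ s, 0 < s → ∀ r ∈ Icc a b, ‖g s r‖ ≤ C)
    (hcont : ∀ r ∈ Icc a b, ContinuousOn (fun s => g s r) (Ioi 0)) :
    ContinuousOn (fun s => ∫ r, g s r ∂μ) (Ioi (0:ℝ)) := by
  intro s₀ hs₀
  have hmem : ∀ᶠ s in nhdsWithin s₀ (Ioi (0:ℝ)), s ∈ Ioi (0:ℝ) := self_mem_nhdsWithin
  refine tendsto_integral_filter_of_dominated_convergence (fun _ => C)
    ?_ ?_ (integrable_const C) ?_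
  · filter_upwards [hmem] with s hs using hmeas s hs
  · filter_upwards [hmem] with s hs
    filter_upwards [hsupp] with r hr using hbound s hs r hr
  · filter_upwards [hsupp] with r hr
    exact hcont r hr s₀ hs₀

section Cont
variable {μ : Measure ℝ} [IsProbabilityMeasure μ] {a b : ℝ}
  (ha : 0 < a) (hab : a ≤ b) (hsupp : ∀ᵐ r ∂μ, r ∈ Icc a b)

include ha hab hsupp

lemma Lfun_cont : ContinuousOn (Lfun μ) (Ioi (0:ℝ)) := by
  apply contOn_param_integral hsupp (fun s r => r / (s + r)) (C := 1)
  · intro s hs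
    exact (by fun_prop : Measurable fun r : ℝ => r/(s+r)).aestronglyMeasurable
  · intro s hs r hr
    obtain ⟨h1, h2⟩ := hr
    rw [Real.norm_eq_abs, abs_of_nonneg (div_nonneg (by linarith) (by linarith)),
      div_le_one (by linarith)]
    linarith
  · intro r hr s hs
    have : (0:ℝ) < s + r := by
      have := hr.1; simp only [mem_Ioi] at hs; linarith
    exact (ContinuousAt.div continuousAt_const (continuousAt_id.add continuousAt_const)
      (ne_of_gt this)).continuousWithinAt

lemma Kfun_cont : ContinuousOn (Kfun μ) (Ioi (0:ℝ)) := by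
  apply contOn_param_integral hsupp (fun s r => r ^ 2 / (s + r) ^ 2) (C := 1)
  · intro s hs
    exact (by fun_prop : Measurable fun r : ℝ => r^2/(s+r)^2).aestronglyMeasurable
  · intro s hs r hr
    obtain ⟨h1, h2⟩ := hr
    rw [Real.norm_eq_abs, abs_of_nonneg (div_nonneg (sq_nonneg r) (sq_nonneg _)),
      div_le_one (pow_pos (by linarith) 2)]
    nlinarith
  · intro r hr s hs
    have h0 : (0:ℝ) < s + r := by
      have := hr.1; simp only [mem_Ioi] at hs; linarith
    exact (ContinuousAt.div continuousAt_const
      ((continuousAt_id.add continuousAt_const).pow 2)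
      (ne_of_gt (pow_pos h0 2))).continuousWithinAt

lemma Tfun_cont : ContinuousOn (Tfun μ) (Ioi (0:ℝ)) := by
  apply contOn_param_integral hsupp (fun s r => r / (s + r) ^ 2) (C := 1/a)
  · intro s hs
    exact (by fun_prop : Measurable fun r : ℝ => r/(s+r)^2).aestronglyMeasurable
  · intro s hs r hr
    obtain ⟨h1, h2⟩ := hr
    have hr0 : (0:ℝ) < r := by linarith
    rw [Real.norm_eq_abs, abs_of_nonneg (div_nonneg hr0.le (sq_nonneg _))]
    rw [div_le_div_iff₀ (pow_pos (by linarith) 2) ha]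
    nlinarith
  · intro r hr s hs
    have h0 : (0:ℝ) < s + r := by
      have := hr.1; simp only [mem_Ioi] at hs; linarith
    exact (ContinuousAt.div continuousAt_const
      ((continuousAt_id.add continuousAt_const).pow 2)
      (ne_of_gt (pow_pos h0 2))).continuousWithinAt

end Cont

lemma Ffun_contOn {H G : Measure ℝ} [IsProbabilityMeasure H] [IsProbabilityMeasure G]
    {a b φ ρ2 σ2 : ℝ} (ha : 0 < a) (hab : a ≤ b)
    (hH : ∀ᵐ r ∂H, r ∈ Icc a b) (hG : ∀ᵐ r ∂G, r ∈ Icc a b)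
    {S : Set ℝ} (hS : S ⊆ Ioi 0) (hd : ∀ s ∈ S, 1 - φ * Kfun H s ≠ 0) :
    ContinuousOn (Ffun H G φ ρ2 σ2) S := by
  have hK := (Kfun_cont ha hab hH).mono hS
  have hT := (Tfun_cont ha hab hG).mono hS
  have htv : ContinuousOn (fun s => φ * Kfun H s / (1 - φ * Kfun H s)) S :=
    (continuousOn_const.mul hK).div (continuousOn_const.sub (continuousOn_const.mul hK)) hd
  unfold Ffun
  exact (continuousOn_const.add ((continuousOn_const.mul (continuousOn_const.add htv)).mul
    (((continuous_pow 2).continuousOn).mul hT))).add (continuousOn_const.mul htv)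

set_option maxHeartbeats 1000000 in
lemma arith_large {a b φ ρ2 σ2 s k t Mg : ℝ}
    (ha : 0 < a) (hab : a ≤ b) (hφ : 0 < φ) (hρ2 : 0 < ρ2) (hσ2 : 0 < σ2)
    (hsb : b ≤ s) (hk0 : 0 ≤ k) (hkU : k*(s+b)^2 ≤ b^2) (hd : s ≤ (1-φ*k)*(s+b))
    (ht0 : 0 ≤ t) (hgap : 2*s*a^2/(s+b)^2 ≤ Mg - s^2*t) (hMgb : Mg ≤ b)
    (hs4 : 4*φ*b^2*(ρ2*b+σ2) ≤ ρ2*a^2*s) :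
    σ2 + ρ2*(1 + φ*k/(1-φ*k))*(s^2*t) + σ2*(φ*k/(1-φ*k)) ≤ σ2 + ρ2*Mg - ρ2*a^2/(4*s) := by
  have hb : 0 < b := lt_of_lt_of_le ha hab
  have hs0 : 0 < s := lt_of_lt_of_le hb hsb
  have hd0 : 0 < 1 - φ*k := by nlinarith
  set d := 1 - φ*k with hddef
  have htv0 : 0 ≤ φ*k/d := div_nonneg (mul_nonneg hφ.le hk0) hd0.le
  have hA : k*s*s ≤ k*s*(d*(s+b)) := mul_le_mul_of_nonneg_left hd (mul_nonneg hk0 hs0.le)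
  have hB : k*(s+b)*s ≤ k*(s+b)*(s+b) :=
    mul_le_mul_of_nonneg_left (by linarith) (mul_nonneg hk0 (by linarith))
  have hC : k*(s+b)^2*d ≤ b^2*d := mul_le_mul_of_nonneg_right hkU hd0.le
  have hres : k*s^2 ≤ b^2*d := by
    nlinarith [hA, mul_le_mul_of_nonneg_right hB hd0.le, hC]
  have htvU : φ*k/d ≤ φ*b^2/s^2 := by
    rw [div_le_div_iff₀ hd0 (pow_pos hs0 2)]
    nlinarith [mul_le_mul_of_nonneg_left hres hφ.le]
  have htc0 : 0 ≤ s^2*t := by positivity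
  have htcM : s^2*t ≤ Mg := by
    have : 0 ≤ 2*s*a^2/(s+b)^2 := by positivity
    linarith
  have hstep1 : (φ*k/d)*(ρ2*(s^2*t)+σ2) ≤ (φ*b^2/s^2)*(ρ2*b+σ2) := by
    apply mul_le_mul htvU _ (by positivity) (by positivity)
    nlinarith
  have hstep2 : (φ*b^2/s^2)*(ρ2*b+σ2) ≤ ρ2*a^2/(4*s) := by
    rw [div_mul_eq_mul_div, div_le_div_iff₀ (pow_pos hs0 2) (by positivity)]
    nlinarith [mul_le_mul_of_nonneg_right hs4 hs0.le]
  have hstep3 : ρ2*(s^2*t) ≤ ρ2*Mg - ρ2*(a^2/(2*s)) := by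
    have h2 : (s+b)^2 ≤ 4*s^2 := by nlinarith
    have h1 : a^2/(2*s) ≤ 2*s*a^2/(s+b)^2 := by
      rw [div_le_div_iff₀ (by positivity) (pow_pos (by linarith) 2)]
      nlinarith [mul_le_mul_of_nonneg_left h2 (sq_nonneg a)]
    nlinarith
  have hexp : σ2 + ρ2*(1 + φ*k/d)*(s^2*t) + σ2*(φ*k/d)
      = σ2 + ρ2*(s^2*t) + (φ*k/d)*(ρ2*(s^2*t)+σ2) := by ring
  rw [hexp]
  have hfin : ρ2*(a^2/(2*s)) - ρ2*a^2/(4*s) = ρ2*a^2/(4*s) := by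
    field_simp
    ring
  linarith [hstep1, hstep2, hstep3, hfin]

set_option maxHeartbeats 1000000 in
lemma arith_tail {a b φ ρ2 σ2 s k t Mg : ℝ}
    (ha : 0 < a) (hab : a ≤ b) (hφ : 0 < φ) (hρ2 : 0 < ρ2) (hσ2 : 0 < σ2)
    (hsb : b ≤ s) (hk0 : 0 ≤ k) (hd : s ≤ (1-φ*k)*(s+b))
    (ht0 : 0 ≤ t) (hgapU : Mg - s^2*t ≤ b^2*(2*s+b)/s^2) :
    σ2 + ρ2*Mg - 3*ρ2*b^2/s ≤ σ2 + ρ2*(1 + φ*k/(1-φ*k))*(s^2*t) + σ2*(φ*k/(1-φ*k)) := by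
  have hb : 0 < b := lt_of_lt_of_le ha hab
  have hs0 : 0 < s := lt_of_lt_of_le hb hsb
  have hd0 : 0 < 1 - φ*k := by nlinarith
  have htv0 : 0 ≤ φ*k/(1-φ*k) := div_nonneg (mul_nonneg hφ.le hk0) hd0.le
  have htc0 : 0 ≤ s^2*t := by positivity
  have h1 : b^2*(2*s+b)/s^2 ≤ 3*b^2/s := by
    rw [div_le_div_iff₀ (pow_pos hs0 2) hs0]
    nlinarith [mul_le_mul_of_nonneg_left (show 2*s+b ≤ 3*s by linarith)
      (mul_nonneg (sq_nonneg b) hs0.le)]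
  have hE : σ2 + ρ2*(1 + φ*k/(1-φ*k))*(s^2*t) + σ2*(φ*k/(1-φ*k))
      = σ2 + ρ2*(s^2*t) + ρ2*((φ*k/(1-φ*k))*(s^2*t)) + σ2*(φ*k/(1-φ*k)) := by ring
  rw [hE]
  have hY : ρ2*(3*b^2/s) = 3*ρ2*b^2/s := by ring
  linarith [mul_nonneg hρ2.le (mul_nonneg htv0 htc0), mul_nonneg hσ2.le htv0,
    mul_le_mul_of_nonneg_left h1 hρ2.le, mul_le_mul_of_nonneg_left hgapU hρ2.le, hY]

set_option maxHeartbeats 1000000 in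
lemma arith_small_upper {a b φ ρ2 σ2 s k t : ℝ}
    (ha : 0 < a) (hab : a ≤ b) (hφ : 0 < φ) (hρ2 : 0 < ρ2) (hσ2 : 0 < σ2)
    (hφ1 : φ < 1) (hs0 : 0 < s) (hsb : s ≤ b) (hk0 : 0 ≤ k)
    (hkU1 : k ≤ 1 - s*(s+2*a)/(s+b)^2) (ht0 : 0 ≤ t) (htU : t ≤ b/a^2) :
    σ2 + ρ2*(1 + φ*k/(1-φ*k))*(s^2*t) + σ2*(φ*k/(1-φ*k))
      ≤ σ2 + σ2*φ/(1-φ) + (ρ2*b*s^2/a^2 - σ2*φ*a*s/(2*b^2))/(1-φ) := by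
  have hb : 0 < b := lt_of_lt_of_le ha hab
  have hq0 : 0 ≤ s*(s+2*a)/(s+b)^2 := by positivity
  have hk1 : k ≤ 1 := by linarith
  have hd0 : 0 < 1 - φ*k := by nlinarith [mul_le_mul_of_nonneg_left hk1 hφ.le]
  have hdφ : 1-φ ≤ 1-φ*k := by nlinarith [mul_le_mul_of_nonneg_left hk1 hφ.le]
  have hφ1' : (0:ℝ) < 1-φ := by linarith
  have hd0' : (1:ℝ) - φ*k ≠ 0 := ne_of_gt hd0
  have hφ1'' : (1:ℝ) - φ ≠ 0 := ne_of_gt hφ1'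
  have ha' : a ≠ 0 := ne_of_gt ha
  have hb' : b ≠ 0 := ne_of_gt hb
  have h1tv : 1 + φ*k/(1-φ*k) = 1/(1-φ*k) := by field_simp; ring
  have hP : ρ2*(1 + φ*k/(1-φ*k))*(s^2*t) ≤ ρ2*b*s^2/(a^2*(1-φ)) := by
    rw [h1tv]
    have e1 : 1/(1-φ*k) ≤ 1/(1-φ) := one_div_le_one_div_of_le hφ1' hdφ
    have e2 : s^2*t ≤ s^2*(b/a^2) := mul_le_mul_of_nonneg_left htU (sq_nonneg s)
    have e3 : ρ2*(1/(1-φ*k)) ≤ ρ2*(1/(1-φ)) := mul_le_mul_of_nonneg_left e1 hρ2.le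
    have e4 : ρ2*(1/(1-φ*k))*(s^2*t) ≤ ρ2*(1/(1-φ))*(s^2*(b/a^2)) := by
      apply mul_le_mul e3 e2 (by positivity)
      positivity
    have e5 : ρ2*(1/(1-φ))*(s^2*(b/a^2)) = ρ2*b*s^2/(a^2*(1-φ)) := by
      field_simp
    linarith
  have hneg : σ2*(φ*k/(1-φ*k)) ≤ σ2*φ/(1-φ) - σ2*φ*a*s/(2*b^2*(1-φ)) := by
    have hid : σ2*(φ*k/(1-φ*k)) = σ2*φ/(1-φ) + (σ2*φ/(1-φ))*((k-1)/(1-φ*k)) := by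
      field_simp
      ring
    have hkm : k - 1 ≤ -(a*s/(2*b^2)) := by
      have e0 : a*s/(2*b^2) ≤ s*(s+2*a)/(s+b)^2 := by
        rw [div_le_div_iff₀ (by positivity) (pow_pos (by linarith) 2)]
        have h4b : (s+b)^2 ≤ 4*b^2 := by nlinarith
        nlinarith [mul_le_mul_of_nonneg_left h4b (mul_nonneg ha.le hs0.le),
          mul_pos (mul_pos hs0 hs0) (mul_pos hb hb)]
      linarith
    have hr1 : (k-1)/(1-φ*k) ≤ -(a*s/(2*b^2)) := by
      have e6 : (k-1)/(1-φ*k) ≤ k-1 := by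
        rw [div_le_iff₀ hd0]
        nlinarith [mul_nonneg (mul_nonneg hφ.le hk0) (show (0:ℝ) ≤ 1-k by linarith)]
      linarith
    have e7 : (σ2*φ/(1-φ))*((k-1)/(1-φ*k)) ≤ (σ2*φ/(1-φ))*(-(a*s/(2*b^2))) :=
      mul_le_mul_of_nonneg_left hr1 (div_nonneg (by positivity) hφ1'.le)
    have e8 : (σ2*φ/(1-φ))*(-(a*s/(2*b^2))) = -(σ2*φ*a*s/(2*b^2*(1-φ))) := by
      field_simp
    linarith [hid, e7, e8]
  have hre : (ρ2*b*s^2/a^2 - σ2*φ*a*s/(2*b^2))/(1-φ)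
      = ρ2*b*s^2/(a^2*(1-φ)) - σ2*φ*a*s/(2*b^2*(1-φ)) := by
    field_simp
  linarith

set_option maxHeartbeats 1000000 in
lemma arith_small_lower {a b φ ρ2 σ2 s k t : ℝ}
    (ha : 0 < a) (hab : a ≤ b) (hφ : 0 < φ) (hρ2 : 0 < ρ2) (hσ2 : 0 < σ2)
    (hφ1 : φ < 1) (hs0 : 0 < s) (hsb : s ≤ b) (hk0 : 0 ≤ k) (hk1 : k ≤ 1)
    (hkL : 1 - s*(s+2*b)/a^2 ≤ k) (ht0 : 0 ≤ t) :
    σ2 + σ2*φ/(1-φ) - 3*σ2*φ*b*s/(a^2*(1-φ)^2)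
      ≤ σ2 + ρ2*(1 + φ*k/(1-φ*k))*(s^2*t) + σ2*(φ*k/(1-φ*k)) := by
  have hb : 0 < b := lt_of_lt_of_le ha hab
  have hd0 : 0 < 1 - φ*k := by nlinarith [mul_le_mul_of_nonneg_left hk1 hφ.le]
  have hdφ : 1-φ ≤ 1-φ*k := by nlinarith [mul_le_mul_of_nonneg_left hk1 hφ.le]
  have hφ1' : (0:ℝ) < 1-φ := by linarith
  have hd0' : (1:ℝ) - φ*k ≠ 0 := ne_of_gt hd0
  have hφ1'' : (1:ℝ) - φ ≠ 0 := ne_of_gt hφ1'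
  have ha' : a ≠ 0 := ne_of_gt ha
  have hpos : 0 ≤ ρ2*(1 + φ*k/(1-φ*k))*(s^2*t) := by
    have : 0 ≤ φ*k/(1-φ*k) := div_nonneg (mul_nonneg hφ.le hk0) hd0.le
    have h2 : 0 ≤ 1 + φ*k/(1-φ*k) := by linarith
    positivity
  have hid : σ2*(φ*k/(1-φ*k)) = σ2*φ/(1-φ) + (σ2*φ/(1-φ))*((k-1)/(1-φ*k)) := by
    field_simp
    ring
  have hstep1 : (k-1)/(1-φ) ≤ (k-1)/(1-φ*k) := by
    rw [div_le_div_iff₀ hφ1' hd0]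
    nlinarith [mul_nonneg hφ.le (sq_nonneg (1-k))]
  have hstep2 : -(3*b*s/a^2) ≤ k-1 := by
    have e0 : s*(s+2*b)/a^2 ≤ 3*b*s/a^2 := by
      rw [div_le_div_iff₀ (by positivity) (by positivity)]
      nlinarith [mul_le_mul_of_nonneg_left (show s+2*b ≤ 3*b by linarith)
        (mul_nonneg hs0.le (sq_nonneg a))]
    linarith
  have hstep3 : (-(3*b*s/a^2))/(1-φ) ≤ (k-1)/(1-φ) := by
    rw [div_le_div_iff₀ hφ1' hφ1']
    nlinarith [mul_le_mul_of_nonneg_right hstep2 hφ1'.le]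
  have e7 : (σ2*φ/(1-φ))*((-(3*b*s/a^2))/(1-φ)) ≤ (σ2*φ/(1-φ))*((k-1)/(1-φ*k)) := by
    apply mul_le_mul_of_nonneg_left (le_trans hstep3 hstep1) (div_nonneg (by positivity) hφ1'.le)
  have e8 : (σ2*φ/(1-φ))*((-(3*b*s/a^2))/(1-φ)) = -(3*σ2*φ*b*s/(a^2*(1-φ)^2)) := by
    field_simp
  linarith [hid, e7, e8]

set_option maxHeartbeats 1000000 in
lemma arith_phi_ge_one {a b φ ρ2 σ2 s k t : ℝ}
    (ha : 0 < a) (hab : a ≤ b) (hρ2 : 0 < ρ2) (hσ2 : 0 < σ2)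
    (hφ1 : 1 ≤ φ) (hs0 : 0 < s) (hsa : s ≤ a) (hk0 : 0 ≤ k)
    (hkL2 : a^2/(s+b)^2 ≤ k) (hkL3 : 1 - s*(s+2*b)/a^2 ≤ k)
    (hd : s ≤ (1-φ*k)*(s+b)) (ht0 : 0 ≤ t) :
    σ2 + σ2*(a^4/(12*b^3*s)) ≤ σ2 + ρ2*(1 + φ*k/(1-φ*k))*(s^2*t) + σ2*(φ*k/(1-φ*k)) := by
  have hb : 0 < b := lt_of_lt_of_le ha hab
  have hφ : 0 < φ := lt_of_lt_of_le one_pos hφ1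
  have hd0 : 0 < 1 - φ*k := by nlinarith
  have hpos : 0 ≤ ρ2*(1 + φ*k/(1-φ*k))*(s^2*t) := by
    have h1 : 0 ≤ φ*k/(1-φ*k) := div_nonneg (mul_nonneg hφ.le hk0) hd0.le
    have h2 : 0 ≤ 1 + φ*k/(1-φ*k) := by linarith
    positivity
  have hk4' : a^2 ≤ k*(4*b^2) := by
    have e1 : a^2/(4*b^2) ≤ a^2/(s+b)^2 :=
      div_le_div_of_nonneg_left (sq_nonneg a) (pow_pos (by linarith) 2) (by nlinarith)
    have e2 : a^2/(4*b^2) ≤ k := le_trans e1 hkL2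
    rwa [div_le_iff₀ (by positivity)] at e2
  have hk3' : (1-k)*a^2 ≤ s*(s+2*b) := by
    have e3 : 1-k ≤ s*(s+2*b)/a^2 := by linarith
    rwa [le_div_iff₀ (by positivity)] at e3
  have htv : a^4/(12*b^3*s) ≤ φ*k/(1-φ*k) := by
    rw [div_le_div_iff₀ (by positivity) hd0]
    have h1 : (1:ℝ)*k ≤ φ*k := mul_le_mul_of_nonneg_right hφ1 hk0
    nlinarith [mul_le_mul_of_nonneg_left h1 (pow_nonneg ha.le 4),
      mul_le_mul_of_nonneg_left hk3' (sq_nonneg a),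
      mul_le_mul_of_nonneg_left hk4' (show (0:ℝ) ≤ 3*b*s by positivity),
      mul_le_mul_of_nonneg_left h1 (show (0:ℝ) ≤ 12*b^3*s by positivity),
      mul_le_mul_of_nonneg_left (show s+2*b ≤ 3*b by linarith)
        (mul_nonneg (sq_nonneg a) hs0.le)]
  have hfin : σ2*(a^4/(12*b^3*s)) ≤ σ2*(φ*k/(1-φ*k)) :=
    mul_le_mul_of_nonneg_left htv hσ2.le
  linarith

set_option maxHeartbeats 2000000 in
/-- With positive signal-to-noise ratio, the globally optimal subsample aspect ratio for
subagged ridgeless predictors with infinitely many bags always lies in the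
overparameterized regime `(1, ∞)`. -/
theorem optimal_subsample_ratio_overparameterized
    (a b : ℝ) (ha : 0 < a) (hab : a ≤ b)
    (H G : Measure ℝ) [IsProbabilityMeasure H] [IsProbabilityMeasure G]
    (hHsupp : ∀ᵐ r ∂H, r ∈ Icc a b) (hGsupp : ∀ᵐ r ∂G, r ∈ Icc a b)
    (φ ρ2 σ2 : ℝ) (hφ : 0 < φ) (hρ2 : 0 < ρ2) (hσ2 : 0 < σ2)
    (v0 J0 tc0 : ℝ → ℝ) (tv0 : ℝ → ℝ → ℝ) (R : ℝ → ℝ)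
    (hv0 : ∀ θ : ℝ, 1 < θ →
      0 < v0 θ ∧ 1 / v0 θ = θ * ∫ r, r / (1 + v0 θ * r) ∂H)
    (hJ0 : ∀ θ : ℝ, J0 θ = ∫ r, r ^ 2 / (1 + v0 θ * r) ^ 2 ∂H)
    (htc0 : ∀ θ : ℝ, tc0 θ = ∫ r, r / (1 + v0 θ * r) ^ 2 ∂G)
    (htv0 : ∀ ϑ θ : ℝ, tv0 ϑ θ = ϑ * J0 θ / ((1 / v0 θ) ^ 2 - ϑ * J0 θ))
    (hR1 : ∀ θ : ℝ, φ ≤ θ → θ < 1 → R θ = σ2 + σ2 * φ / (1 - φ))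
    (hR2 : ∀ θ : ℝ, 1 < θ → R θ = σ2 + ρ2 * (1 + tv0 φ θ) * tc0 θ + σ2 * tv0 φ θ) :
    ∃ θs : ℝ, 1 < θs ∧ φ ≤ θs
      ∧ (∀ θ : ℝ, φ ≤ θ → θ ≠ 1 → R θs ≤ R θ)
      ∧ R θs ≤ σ2 + ρ2 * ∫ r, r ∂G := by
  classical
  have hb : 0 < b := lt_of_lt_of_le ha hab
  set Mg : ℝ := ∫ r, r ∂G with hMgdef
  have hMgbnd := id_bounds ha hab hGsupp
  have hMa : a ≤ Mg := hMgbnd.2.1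
  have hMb : Mg ≤ b := hMgbnd.2.2
  have hnull0 : 0 < σ2 + ρ2*Mg := by
    have h1 := mul_le_mul_of_nonneg_left hMa hρ2.le
    have h2 : 0 < ρ2*a := by positivity
    linarith
  -- correspondence between R on (1,∞) and Ffun
  have hkey : ∀ θ s : ℝ, 1 < θ → 0 < s → v0 θ = 1/s → R θ = Ffun H G φ ρ2 σ2 s := by
    intro θ s hθ hs hveq
    have hTeq : tc0 θ = s^2 * Tfun G s := by
      rw [htc0 θ, hveq, int_eq_T ha hab hGsupp hs]
    have hJeq : J0 θ = s^2 * Kfun H s := by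
      rw [hJ0 θ, hveq, int_eq_K ha hab hHsupp hs]
    have htveq : tv0 φ θ = φ * Kfun H s / (1 - φ * Kfun H s) := by
      rw [htv0 φ θ, hJeq, hveq, one_div_one_div]
      rw [show φ*(s^2*Kfun H s) = s^2*(φ*Kfun H s) by ring,
          show s^2 - s^2*(φ*Kfun H s) = s^2*(1-φ*Kfun H s) by ring]
      exact mul_div_mul_left _ _ (by positivity)
    rw [hR2 θ hθ, htveq, hTeq, Ffun]
  have hLrel : ∀ θ s : ℝ, 1 < θ → 0 < s → v0 θ = 1/s → θ * Lfun H s = 1 := by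
    intro θ s hθ hs hveq
    obtain ⟨hv, heq⟩ := hv0 θ hθ
    rw [hveq, int_eq_L ha hab hHsupp hs, one_div_one_div] at heq
    have hs' : s ≠ 0 := ne_of_gt hs
    exact (mul_left_cancel₀ hs' (show s*1 = s*(θ*Lfun H s) by linear_combination heq)).symm
  -- domain facts
  have hdom : ∀ s : ℝ, 0 < s → φ * Lfun H s ≤ 1 → s ≤ (1 - φ*Kfun H s)*(s+b) := by
    intro s hs hL
    have h := den_lb ha hab hHsupp hφ hs hL
    exact (div_le_iff₀ (by linarith)).1 h
  have hden0 : ∀ s : ℝ, 0 < s → φ * Lfun H s ≤ 1 → 0 < 1 - φ*Kfun H s := by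
    intro s hs hL
    nlinarith [hdom s hs hL]
  have hK0 : ∀ s : ℝ, 0 < s → 0 ≤ Kfun H s := by
    intro s hs
    exact le_trans (by positivity) (Kfun_bounds1 ha hab hHsupp hs).2.1
  -- the good large point s2
  set s2 : ℝ := b + φ*b + 4*φ*b^2*(ρ2*b+σ2)/(ρ2*a^2) + 1 with hs2def
  have hfr0 : 0 < 4*φ*b^2*(ρ2*b+σ2)/(ρ2*a^2) := by positivity
  have hφb0 : 0 < φ*b := by positivity
  have hs2b : b ≤ s2 := by rw [hs2def]; linarith
  have hs20 : 0 < s2 := by linarith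
  have hφLs2 : φ * Lfun H s2 ≤ 1 := by
    have hLu := (Lfun_bounds ha hab hHsupp hs20).2.2
    have h1 : φ * Lfun H s2 ≤ φ * (b/(s2+b)) := mul_le_mul_of_nonneg_left hLu hφ.le
    have h2 : φ * (b/(s2+b)) ≤ 1 := by
      rw [← mul_div_assoc, div_le_one (by linarith)]
      rw [hs2def]; linarith
    linarith
  have hs4 : 4*φ*b^2*(ρ2*b+σ2) ≤ ρ2*a^2*s2 := by
    have h1 : 4*φ*b^2*(ρ2*b+σ2)/(ρ2*a^2) ≤ s2 := by rw [hs2def]; linarith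
    rw [div_le_iff₀ (by positivity)] at h1
    nlinarith [h1]
  set eps2 : ℝ := ρ2*a^2/(4*s2) with heps2def
  have heps2 : 0 < eps2 := by positivity
  have hFs2 : Ffun H G φ ρ2 σ2 s2 ≤ σ2 + ρ2*Mg - eps2 := by
    have hKb := Kfun_bounds1 ha hab hHsupp hs20
    have hkU : Kfun H s2 * (s2+b)^2 ≤ b^2 := by
      have h := hKb.2.2
      rwa [le_div_iff₀ (pow_pos (by linarith) 2)] at h
    have hT := Tfun_bounds ha hab hGsupp hs20
    have hgap := (Mtc_bounds ha hab hGsupp hs20).1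
    have := arith_large ha hab hφ hρ2 hσ2 hs2b (hK0 s2 hs20) hkU
      (hdom s2 hs20 hφLs2) hT.2.1 hgap hMb hs4
    rw [Ffun]
    exact this
  -- the right compact endpoint
  set Sb : ℝ := s2 + 12*b^2*s2/a^2 + 1 with hSbdef
  have hSfr0 : 0 < 12*b^2*s2/a^2 := by positivity
  have hSs2 : s2 ≤ Sb := by rw [hSbdef]; linarith
  have hSb0 : 0 < Sb := by linarith
  -- tail guard
  have htail : ∀ s : ℝ, Sb < s → φ*Lfun H s ≤ 1 →
      Ffun H G φ ρ2 σ2 s2 < Ffun H G φ ρ2 σ2 s := by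
    intro s hSls hφL
    have hs0' : 0 < s := by linarith
    have hsb' : b ≤ s := by linarith
    have ht0 := (Tfun_bounds ha hab hGsupp hs0').2.1
    have hgapU := (Mtc_bounds ha hab hGsupp hs0').2
    have h1 := arith_tail ha hab hφ hρ2 hσ2 hsb' (hK0 s hs0') (hdom s hs0' hφL) ht0 hgapU
    have h2 : 3*ρ2*b^2/s < eps2 := by
      rw [heps2def, div_lt_div_iff₀ hs0' (by positivity)]
      have h3 : 12*b^2*s2/a^2 < s := by rw [hSbdef] at hSls; linarith
      rw [div_lt_iff₀ (by positivity)] at h3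
      linarith [mul_lt_mul_of_pos_left h3 hρ2]
    simp only [Ffun] at hFs2 ⊢
    linarith [hFs2, h1, h2]
  by_cases hφlt : φ < 1
  · -- underparameterized data aspect ratio possible: φ < 1
    have h1φ : (0:ℝ) < 1-φ := by linarith
    set s1 : ℝ := min b (σ2*φ*a^3/(4*ρ2*b^3)) with hs1def
    have hs10 : 0 < s1 := lt_min hb (by positivity)
    have hs1b : s1 ≤ b := min_le_left _ _
    set eps1 : ℝ := σ2*φ*a*s1/(4*b^2*(1-φ)) with heps1def
    have heps1 : 0 < eps1 := by positivity
    have hφLs1 : φ * Lfun H s1 ≤ 1 := by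
      have hLb' := Lfun_bounds ha hab hHsupp hs10
      have hL1 : Lfun H s1 ≤ 1 := le_trans hLb'.2.2 (by rw [div_le_one (by linarith)]; linarith)
      have hL0 : 0 ≤ Lfun H s1 := le_trans (by positivity) hLb'.2.1
      exact mul_le_one₀ hφlt.le hL0 hL1
    have hFs1 : Ffun H G φ ρ2 σ2 s1 ≤ σ2 + σ2*φ/(1-φ) - eps1 := by
      have hKb2 := Kfun_bounds2 ha hab hHsupp hs10
      have hT := Tfun_bounds ha hab hGsupp hs10
      have h := arith_small_upper ha hab hφ hρ2 hσ2 hφlt hs10 hs1b (hK0 s1 hs10)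
        hKb2.2 hT.2.1 hT.2.2
      have hbr : ρ2*b*s1^2/a^2 - σ2*φ*a*s1/(2*b^2) ≤ -(σ2*φ*a*s1/(4*b^2)) := by
        have hs1le : s1 ≤ σ2*φ*a^3/(4*ρ2*b^3) := min_le_right _ _
        have e : ρ2*b*s1^2/a^2 ≤ σ2*φ*a*s1/(4*b^2) := by
          rw [div_le_div_iff₀ (by positivity) (by positivity)]
          have e2 : s1*(4*ρ2*b^3) ≤ σ2*φ*a^3 := by
            rw [le_div_iff₀ (by positivity)] at hs1le
            linarith
          nlinarith [mul_le_mul_of_nonneg_left e2 hs10.le]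
        have hZ : σ2*φ*a*s1/(2*b^2) = 2*(σ2*φ*a*s1/(4*b^2)) := by ring
        linarith
      have hdivle : (ρ2*b*s1^2/a^2 - σ2*φ*a*s1/(2*b^2))/(1-φ) ≤ (-(σ2*φ*a*s1/(4*b^2)))/(1-φ) := by
        rw [div_le_div_iff₀ h1φ h1φ]
        nlinarith [mul_le_mul_of_nonneg_right hbr h1φ.le]
      have heq : (-(σ2*φ*a*s1/(4*b^2)))/(1-φ) = -eps1 := by
        rw [heps1def]
        field_simp
      simp only [Ffun]
      linarith
    set dl : ℝ := min s1 (eps1*a^2*(1-φ)^2/(6*σ2*φ*b)) with hdldef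
    have hdl0 : 0 < dl := lt_min hs10 (by positivity)
    have hdls1 : dl ≤ s1 := min_le_left _ _
    have hguard : ∀ s : ℝ, 0 < s → s < dl →
        Ffun H G φ ρ2 σ2 s1 < Ffun H G φ ρ2 σ2 s := by
      intro s hs0' hsdl
      have hsb' : s ≤ b := le_trans (le_of_lt (lt_of_lt_of_le hsdl hdls1)) hs1b
      have hKb2 := Kfun_bounds2 ha hab hHsupp hs0'
      have hq0 : 0 ≤ s*(s+2*a)/(s+b)^2 := by positivity
      have hk1 : Kfun H s ≤ 1 := by linarith [hKb2.2]
      have hT := Tfun_bounds ha hab hGsupp hs0'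
      have h := arith_small_lower ha hab hφ hρ2 hσ2 hφlt hs0' hsb' (hK0 s hs0')
        hk1 hKb2.1 hT.2.1
      have h2 : 3*σ2*φ*b*s/(a^2*(1-φ)^2) < eps1 := by
        have hdlle : dl ≤ eps1*a^2*(1-φ)^2/(6*σ2*φ*b) := min_le_right _ _
        rw [div_lt_iff₀ (by positivity)]
        have h3 : s < eps1*a^2*(1-φ)^2/(6*σ2*φ*b) := lt_of_lt_of_le hsdl hdlle
        rw [lt_div_iff₀ (by positivity)] at h3
        have hpos : 0 < σ2*φ*b*s := by positivity
        linarith [h3, hpos]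
      simp only [Ffun] at hFs1 ⊢
      linarith [hFs1, h, h2]
    -- the compact constrained set
    set Cs : Set ℝ := Icc dl Sb ∩ (fun s => φ * Lfun H s) ⁻¹' Iic 1 with hCdef
    have hCsub : Cs ⊆ Ioi 0 := by
      intro s hs
      have := hs.1.1
      simp only [mem_Ioi]
      linarith
    have hCcl : IsClosed Cs :=
      ContinuousOn.preimage_isClosed_of_isClosed
        (continuousOn_const.mul ((Lfun_cont ha hab hHsupp).mono (by
          intro s hs
          have := hs.1
          simp only [mem_Ioi]
          linarith)))
        isClosed_Icc isClosed_Iic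
    have hCcomp : IsCompact Cs := IsCompact.of_isClosed_subset isCompact_Icc hCcl inter_subset_left
    have hs1C : s1 ∈ Cs := ⟨⟨hdls1, by linarith⟩, by simpa [mem_Iic] using hφLs1⟩
    have hs2C : s2 ∈ Cs := ⟨⟨by linarith, hSs2⟩, by simpa [mem_Iic] using hφLs2⟩
    have hdne : ∀ s ∈ Cs, 1 - φ*Kfun H s ≠ 0 := by
      intro s hs
      have hs0' : 0 < s := hCsub hs
      exact ne_of_gt (hden0 s hs0' hs.2)
    have hFc : ContinuousOn (Ffun H G φ ρ2 σ2) Cs := Ffun_contOn ha hab hHsupp hGsupp hCsub hdne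
    obtain ⟨sm, hsmC, hsmmin⟩ := hCcomp.exists_isMinOn ⟨s1, hs1C⟩ hFc
    have hmin : ∀ s ∈ Cs, Ffun H G φ ρ2 σ2 sm ≤ Ffun H G φ ρ2 σ2 s := isMinOn_iff.1 hsmmin
    have hsm0 : 0 < sm := hCsub hsmC
    have hφLsm : φ * Lfun H sm ≤ 1 := hsmC.2
    have hLbm := Lfun_bounds ha hab hHsupp hsm0
    have hL0 : 0 < Lfun H sm := lt_of_lt_of_le (by positivity) hLbm.2.1
    have hL1 : Lfun H sm < 1 :=
      lt_of_le_of_lt hLbm.2.2 (by rw [div_lt_one (by linarith)]; linarith)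
    have hθs1 : 1 < 1/Lfun H sm := by rw [lt_div_iff₀ hL0]; linarith
    have hv0sm : v0 (1/Lfun H sm) = 1/sm := by
      obtain ⟨hv, heq⟩ := hv0 (1/Lfun H sm) hθs1
      refine fixed_point_unique ha hab hHsupp (by positivity) hv (by positivity) heq ?_
      rw [int_eq_L ha hab hHsupp hsm0, one_div_one_div]
      field_simp
    have hRθs : R (1/Lfun H sm) = Ffun H G φ ρ2 σ2 sm := hkey _ _ hθs1 hsm0 hv0sm
    refine ⟨1/Lfun H sm, hθs1, ?_, ?_, ?_⟩
    · rw [le_div_iff₀ hL0]; linarith [hφLsm]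
    · intro θ hθφ' hθne
      rcases lt_trichotomy θ 1 with hlt | heq1 | hgt
      · rw [hR1 θ hθφ' hlt, hRθs]
        have hm1 := hmin s1 hs1C
        linarith [hFs1, heps1]
      · exact absurd heq1 hθne
      · obtain ⟨hv, _⟩ := hv0 θ hgt
        have hs0' : 0 < 1/(v0 θ) := by positivity
        have hveq : v0 θ = 1/(1/(v0 θ)) := (one_div_one_div _).symm
        set s : ℝ := 1/(v0 θ) with hsdef
        have hRθ : R θ = Ffun H G φ ρ2 σ2 s := hkey θ s hgt hs0' hveq
        have hLrel' := hLrel θ s hgt hs0' hveq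
        have hθ0 : (0:ℝ) < θ := by linarith
        have hLeq : Lfun H s = 1/θ := eq_one_div_of_mul_eq_one_left (by linarith [hLrel'])
        have hφLs : φ * Lfun H s ≤ 1 := by
          rw [hLeq, mul_one_div, div_le_one hθ0]
          exact hθφ'
        rw [hRθs, hRθ]
        by_cases hmem : s ∈ Icc dl Sb
        · exact hmin s ⟨hmem, by simpa [mem_Iic] using hφLs⟩
        · rw [mem_Icc, not_and_or] at hmem
          rcases hmem with hc | hc
          · push_neg at hc
            have hg := hguard s hs0' hc
            have hm1 := hmin s1 hs1C
            linarith
          · push_neg at hc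
            have hg := htail s hc hφLs
            have hm2 := hmin s2 hs2C
            linarith
    · rw [hRθs]
      have hm2 := hmin s2 hs2C
      linarith [hFs2, heps2]
  · -- φ ≥ 1
    push_neg at hφlt
    set dl : ℝ := min a (σ2*a^4/(12*b^3*(σ2+ρ2*Mg))) with hdldef
    have hdl0 : 0 < dl := lt_min ha (by positivity)
    have hdla : dl ≤ a := min_le_left _ _
    have hguard : ∀ s : ℝ, 0 < s → s < dl → φ*Lfun H s ≤ 1 →
        Ffun H G φ ρ2 σ2 s2 < Ffun H G φ ρ2 σ2 s := by
      intro s hs0' hsdl hφL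
      have hsa : s ≤ a := le_trans (le_of_lt hsdl) hdla
      have hKb1 := Kfun_bounds1 ha hab hHsupp hs0'
      have hKb2 := Kfun_bounds2 ha hab hHsupp hs0'
      have hT := Tfun_bounds ha hab hGsupp hs0'
      have h := arith_phi_ge_one ha hab hρ2 hσ2 hφlt hs0' hsa (hK0 s hs0')
        hKb1.2.1 hKb2.1 (hdom s hs0' hφL) hT.2.1
      have h2 : σ2+ρ2*Mg ≤ σ2*(a^4/(12*b^3*s)) := by
        have hsle : s < σ2*a^4/(12*b^3*(σ2+ρ2*Mg)) := lt_of_lt_of_le hsdl (min_le_right _ _)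
        rw [lt_div_iff₀ (by positivity)] at hsle
        rw [← mul_div_assoc, le_div_iff₀ (by positivity)]
        nlinarith [hsle, sq_nonneg b]
      simp only [Ffun] at hFs2 ⊢
      linarith [hFs2, heps2, h, h2]
    set Cs : Set ℝ := Icc dl Sb ∩ (fun s => φ * Lfun H s) ⁻¹' Iic 1 with hCdef
    have hCsub : Cs ⊆ Ioi 0 := by
      intro s hs
      have := hs.1.1
      simp only [mem_Ioi]
      linarith
    have hCcl : IsClosed Cs :=
      ContinuousOn.preimage_isClosed_of_isClosed
        (continuousOn_const.mul ((Lfun_cont ha hab hHsupp).mono (by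
          intro s hs
          have := hs.1
          simp only [mem_Ioi]
          linarith)))
        isClosed_Icc isClosed_Iic
    have hCcomp : IsCompact Cs := IsCompact.of_isClosed_subset isCompact_Icc hCcl inter_subset_left
    have hs2C : s2 ∈ Cs := ⟨⟨by linarith, hSs2⟩, by simpa [mem_Iic] using hφLs2⟩
    have hdne : ∀ s ∈ Cs, 1 - φ*Kfun H s ≠ 0 := by
      intro s hs
      have hs0' : 0 < s := hCsub hs
      exact ne_of_gt (hden0 s hs0' hs.2)
    have hFc : ContinuousOn (Ffun H G φ ρ2 σ2) Cs := Ffun_contOn ha hab hHsupp hGsupp hCsub hdne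
    obtain ⟨sm, hsmC, hsmmin⟩ := hCcomp.exists_isMinOn ⟨s2, hs2C⟩ hFc
    have hmin : ∀ s ∈ Cs, Ffun H G φ ρ2 σ2 sm ≤ Ffun H G φ ρ2 σ2 s := isMinOn_iff.1 hsmmin
    have hsm0 : 0 < sm := hCsub hsmC
    have hφLsm : φ * Lfun H sm ≤ 1 := hsmC.2
    have hLbm := Lfun_bounds ha hab hHsupp hsm0
    have hL0 : 0 < Lfun H sm := lt_of_lt_of_le (by positivity) hLbm.2.1
    have hL1 : Lfun H sm < 1 :=
      lt_of_le_of_lt hLbm.2.2 (by rw [div_lt_one (by linarith)]; linarith)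
    have hθs1 : 1 < 1/Lfun H sm := by rw [lt_div_iff₀ hL0]; linarith
    have hv0sm : v0 (1/Lfun H sm) = 1/sm := by
      obtain ⟨hv, heq⟩ := hv0 (1/Lfun H sm) hθs1
      refine fixed_point_unique ha hab hHsupp (by positivity) hv (by positivity) heq ?_
      rw [int_eq_L ha hab hHsupp hsm0, one_div_one_div]
      field_simp
    have hRθs : R (1/Lfun H sm) = Ffun H G φ ρ2 σ2 sm := hkey _ _ hθs1 hsm0 hv0sm
    refine ⟨1/Lfun H sm, hθs1, ?_, ?_, ?_⟩
    · rw [le_div_iff₀ hL0]; linarith [hφLsm]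
    · intro θ hθφ' hθne
      rcases lt_trichotomy θ 1 with hlt | heq1 | hgt
      · linarith [hφlt.trans hθφ']
      · exact absurd heq1 hθne
      · obtain ⟨hv, _⟩ := hv0 θ hgt
        have hs0' : 0 < 1/(v0 θ) := by positivity
        have hveq : v0 θ = 1/(1/(v0 θ)) := (one_div_one_div _).symm
        set s : ℝ := 1/(v0 θ) with hsdef
        have hRθ : R θ = Ffun H G φ ρ2 σ2 s := hkey θ s hgt hs0' hveq
        have hLrel' := hLrel θ s hgt hs0' hveq
        have hθ0 : (0:ℝ) < θ := by linarith
        have hLeq : Lfun H s = 1/θ := eq_one_div_of_mul_eq_one_left (by linarith [hLrel'])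
        have hφLs : φ * Lfun H s ≤ 1 := by
          rw [hLeq, mul_one_div, div_le_one hθ0]
          exact hθφ'
        rw [hRθs, hRθ]
        by_cases hmem : s ∈ Icc dl Sb
        · exact hmin s ⟨hmem, by simpa [mem_Iic] using hφLs⟩
        · rw [mem_Icc, not_and_or] at hmem
          rcases hmem with hc | hc
          · push_neg at hc
            have hg := hguard s hs0' hc hφLs
            have hm2 := hmin s2 hs2C
            linarith
          · push_neg at hc
            have hg := htail s hc hφLs
            have hm2 := hmin s2 hs2C
            linarith
    · rw [hRθs]
      have hm2 := hmin s2 hs2C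
      linarith [hFs2, heps2]
end

section
/- Fix φ ∈ (0, ∞), σ² > 0, ρ² > 0, and let SNR = ρ²/σ². Let R_φ be the isotropic subagged ridgeless risk function on [φ, ∞) \ {1}, and set A = (φ + 1 + φ/SNR)/2 and θ* = A + √(A² − φ). Then A² ≥ φ, θ* ∈ (1, ∞), θ* ≥ φ, R_φ(θ*) ≤ R_φ(θ) for every θ ∈ [φ, ∞) \ {1}, and R_φ(θ*) = (σ²/2)·[ 1 + ((φ − 1)/φ)·SNR + √( (1 − ((φ − 1)/φ)·SNR)² + 4·SNR ) ]. (Optimal risk and optimal subsample aspect ratio for subagged ridgeless predictors with isotropic features and positive finite signal-to-noise ratio.) -/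
set_option maxHeartbeats 1000000

/-- Optimal risk and optimal subsample aspect ratio for subagged ridgeless predictors
with isotropic features and positive finite signal-to-noise ratio. -/
theorem isotropic_subagged_ridgeless_optimal_risk
    (φ σ2 ρ2 : ℝ) (hφ : 0 < φ) (hσ2 : 0 < σ2) (hρ2 : 0 < ρ2)
    (SNR : ℝ) (hSNR : SNR = ρ2 / σ2)
    (R : ℝ → ℝ)
    (hR1 : ∀ θ : ℝ, θ < 1 → R θ = σ2 + σ2 * φ / (1 - φ))
    (hR2 : ∀ θ : ℝ, 1 < θ →
      R θ = σ2 + ρ2 * (θ - 1) ^ 2 / (θ ^ 2 - φ) + σ2 * φ / (θ ^ 2 - φ))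
    (A θs : ℝ) (hA : A = (φ + 1 + φ / SNR) / 2)
    (hθs : θs = A + Real.sqrt (A ^ 2 - φ)) :
    φ ≤ A ^ 2 ∧ 1 < θs ∧ φ ≤ θs
      ∧ (∀ θ : ℝ, φ ≤ θ → θ ≠ 1 → R θs ≤ R θ)
      ∧ R θs = σ2 / 2 *
          (1 + (φ - 1) / φ * SNR
            + Real.sqrt ((1 - (φ - 1) / φ * SNR) ^ 2 + 4 * SNR)) := by
  have hs : 0 < SNR := by rw [hSNR]; positivity
  have hρs : ρ2 = SNR * σ2 := by rw [hSNR]; field_simp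
  -- A > sqrt φ
  have hsφ : Real.sqrt φ ≤ (φ + 1) / 2 := by
    nlinarith [Real.sq_sqrt hφ.le, Real.sqrt_nonneg φ, sq_nonneg (Real.sqrt φ - 1)]
  have hAgt : Real.sqrt φ < A := by
    rw [hA]
    have : 0 < φ / SNR := by positivity
    nlinarith
  have hA0 : 0 < A := lt_of_le_of_lt (Real.sqrt_nonneg φ) hAgt
  have hφA : φ < A ^ 2 := by
    nlinarith [Real.sq_sqrt hφ.le, Real.sqrt_nonneg φ]
  set B := Real.sqrt (A ^ 2 - φ) with hB
  have hBsq : B ^ 2 = A ^ 2 - φ := Real.sq_sqrt (by linarith)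
  have hB0 : 0 < B := Real.sqrt_pos.2 (by linarith)
  -- 2A - 1 - φ = φ/SNR > 0
  have h2A : 2 * A * ρ2 = (φ + 1) * ρ2 + φ * σ2 := by
    rw [hA, hSNR]; field_simp
  have h2Agt : 1 + φ < 2 * A := by nlinarith
  have hBA : (A - 1) ^ 2 < B ^ 2 := by nlinarith
  have hθs1 : 1 < θs := by rw [hθs]; nlinarith [sq_nonneg (B - (A - 1)), sq_nonneg (B + (A - 1))]
  have hθsφ : φ < θs := by rw [hθs]; nlinarith [sq_nonneg (B - (A - 1)), sq_nonneg (B + (A - 1))]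
  have hθs0 : (0:ℝ) < θs := by linarith
  have hD : 0 < θs ^ 2 - φ := by nlinarith
  -- quadratic relation
  have hquad : θs ^ 2 = 2 * A * θs - φ := by rw [hθs]; linear_combination hBsq
  have hquad2 : ρ2 * θs ^ 2 - (φ + 1) * ρ2 * θs - φ * σ2 * θs + ρ2 * φ = 0 := by
    linear_combination ρ2 * hquad + θs * h2A
  -- key polynomial identity
  have key : ∀ θ : ℝ, θs * (ρ2 * (θ - 1) ^ 2 + σ2 * φ) - ρ2 * (θs - 1) * (θ ^ 2 - φ)
      = ρ2 * (θ - θs) ^ 2 := by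
    intro θ
    linear_combination -hquad2
  -- value at θs
  have hm : (ρ2 * (θs - 1) ^ 2 + σ2 * φ) / (θs ^ 2 - φ) = ρ2 * (θs - 1) / θs := by
    rw [div_eq_div_iff hD.ne' hθs0.ne']
    linear_combination key θs
  have hRθs : R θs = σ2 + (ρ2 * (θs - 1) ^ 2 + σ2 * φ) / (θs ^ 2 - φ) := by
    rw [hR2 θs hθs1]; ring
  refine ⟨hφA.le, hθs1, hθsφ.le, ?_, ?_⟩
  · intro θ hθφ hθ1
    rcases lt_or_gt_of_ne hθ1 with hlt | hgt
    · -- θ < 1 branch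
      have hφ1 : φ < 1 := lt_of_le_of_lt hθφ hlt
      rw [hR1 θ hlt, hRθs]
      have h7 : θs * (σ2 * φ * (θs ^ 2 - φ) - (ρ2 * (θs - 1) ^ 2 + σ2 * φ) * (1 - φ))
          = (θs ^ 2 - φ) * (ρ2 * (1 - θs) ^ 2) := by
        linear_combination (θs ^ 2 - φ) * key 1 - (1 - φ) * key θs
      have h8 : 0 ≤ σ2 * φ * (θs ^ 2 - φ) - (ρ2 * (θs - 1) ^ 2 + σ2 * φ) * (1 - φ) := by
        nlinarith [mul_nonneg hD.le (mul_nonneg hρ2.le (sq_nonneg (1 - θs)))]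
      have h9 : (ρ2 * (θs - 1) ^ 2 + σ2 * φ) / (θs ^ 2 - φ) ≤ σ2 * φ / (1 - φ) := by
        rw [div_le_div_iff₀ hD (by linarith)]
        nlinarith
      linarith
    · -- θ > 1 branch
      have hE : 0 < θ ^ 2 - φ := by nlinarith
      have hRθ : R θ = σ2 + (ρ2 * (θ - 1) ^ 2 + σ2 * φ) / (θ ^ 2 - φ) := by
        rw [hR2 θ hgt]; ring
      rw [hRθ, hRθs]
      have h5 : θs * ((ρ2 * (θ - 1) ^ 2 + σ2 * φ) * (θs ^ 2 - φ)
            - (ρ2 * (θs - 1) ^ 2 + σ2 * φ) * (θ ^ 2 - φ))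
          = ρ2 * (θ - θs) ^ 2 * (θs ^ 2 - φ) := by
        linear_combination (θs ^ 2 - φ) * key θ - (θ ^ 2 - φ) * key θs
      have h6 : 0 ≤ (ρ2 * (θ - 1) ^ 2 + σ2 * φ) * (θs ^ 2 - φ)
            - (ρ2 * (θs - 1) ^ 2 + σ2 * φ) * (θ ^ 2 - φ) := by
        nlinarith [mul_nonneg (mul_nonneg hρ2.le (sq_nonneg (θ - θs))) hD.le]
      have h9 : (ρ2 * (θs - 1) ^ 2 + σ2 * φ) / (θs ^ 2 - φ)
          ≤ (ρ2 * (θ - 1) ^ 2 + σ2 * φ) / (θ ^ 2 - φ) := by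
        rw [div_le_div_iff₀ hD hE]; linarith
      linarith
  · -- closed form
    have hinv : θs * (A - B) = φ := by rw [hθs]; linear_combination -hBsq
    have hsqrt : Real.sqrt ((1 - (φ - 1) / φ * SNR) ^ 2 + 4 * SNR) = 2 * SNR / φ * B := by
      rw [show (1 - (φ - 1) / φ * SNR) ^ 2 + 4 * SNR = (2 * SNR / φ * B) ^ 2 by
        linear_combination (norm := (field_simp; ring1)) (-(4 * SNR ^ 2 / φ ^ 2)) * hBsq
          + (-(4 * SNR ^ 2 / φ ^ 2)) * (A + (φ + 1 + φ / SNR) / 2) * hA]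
      exact Real.sqrt_sq (by positivity)
    rw [hRθs, hm, hsqrt]
    linear_combination (norm := (field_simp; ring1)) (ρ2 / (φ * θs)) * hinv + (B / φ + (φ - 1) / (2 * φ)) * hρs
      - (1 / (2 * φ)) * h2A
end

section
/- Fix φ ∈ (0, ∞) and let R_φ be the isotropic subagged ridgeless risk function on [φ, ∞) \ {1}. (1) If ρ² = 0 and σ² > 0, then R_φ(θ) > σ² for every θ ∈ [φ, ∞) \ {1}, the infimum of R_φ over [φ, ∞) \ {1} equals σ², and R_φ(θ) → σ² as θ → ∞. (2) If σ² = 0 and ρ² > 0, then: when φ < 1, R_φ(θ) = 0 for every θ ∈ [φ, 1) and R_φ(θ) > 0 for every θ ∈ (1, ∞), so the global minimum value 0 is attained at every θ ∈ [φ, 1); when φ > 1, the map θ ↦ R_φ(θ) is non-decreasing on [φ, ∞), so its global minimum over [φ, ∞) is attained at θ = φ with value ρ²·(φ − 1)/φ. (Optimal subagged ridgeless risk under isotropic features in the degenerate signal-to-noise regimes SNR = 0 and SNR = ∞.) -/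
/-!
With no signal the risk is `σ²` plus a positive variance term `σ²φ/(1 - φ)` or `σ²φ/(θ² - φ)`,
and the latter vanishes as `θ → ∞`, so `σ²` is an infimum that is approached but never attained.
Without noise the risk is `0` in the interpolation regime `θ < 1` and the positive bias
`ρ²(θ - 1)²/(θ² - φ)` beyond it; the bias is non-decreasing on `[φ, ∞)` because
`(b - 1)²(a² - φ) - (a - 1)²(b² - φ) = (b - a)((a - 1)(b - φ) + (b - 1)(a - φ))`.
-/

open Filter Set Topology

theorem isGLB_image_of_tendsto_of_forall_le {α β : Type*} [ConditionallyCompleteLattice β]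
    [TopologicalSpace β] [ClosedIciTopology β] {l : Filter α} [l.NeBot] {f : α → β} {S : Set α}
    {a : β} (hS : ∀ᶠ x in l, x ∈ S) (hle : ∀ x ∈ S, a ≤ f x) (hf : Tendsto f l (𝓝 a)) :
    IsGLB (f '' S) a :=
  ⟨forall_mem_image.2 hle, fun _ hb =>
    ge_of_tendsto hf (hS.mono fun _ hx => hb (mem_image_of_mem f hx))⟩

theorem csInf_image_eq_of_tendsto_of_forall_le {α β : Type*} [ConditionallyCompleteLattice β]
    [TopologicalSpace β] [ClosedIciTopology β] {l : Filter α} [l.NeBot] {f : α → β} {S : Set α}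
    {a : β} (hS : ∀ᶠ x in l, x ∈ S) (hle : ∀ x ∈ S, a ≤ f x) (hf : Tendsto f l (𝓝 a)) :
    sInf (f '' S) = a :=
  let ⟨x, hx⟩ := hS.exists
  (isGLB_image_of_tendsto_of_forall_le hS hle hf).csInf_eq ⟨f x, mem_image_of_mem f hx⟩

theorem tendsto_div_sq_sub_atTop (c φ : ℝ) :
    Tendsto (fun θ : ℝ => c / (θ ^ 2 - φ)) atTop (𝓝 0) := by
  refine tendsto_const_nhds.div_atTop ?_
  simpa only [sub_eq_add_neg] using
    tendsto_atTop_add_const_right atTop (-φ) (tendsto_pow_atTop two_ne_zero)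

theorem monotoneOn_sq_sub_one_div_sq_sub {φ : ℝ} (hφ : 1 < φ) :
    MonotoneOn (fun θ : ℝ => (θ - 1) ^ 2 / (θ ^ 2 - φ)) (Ici φ) := by
  intro a (ha : φ ≤ a) b (hb : φ ≤ b) hab
  have hden : ∀ θ, φ ≤ θ → 0 < θ ^ 2 - φ := fun θ hθ => by nlinarith
  have key : (b - 1) ^ 2 * (a ^ 2 - φ) - (a - 1) ^ 2 * (b ^ 2 - φ)
      = (b - a) * ((a - 1) * (b - φ) + (b - 1) * (a - φ)) := by ring
  have hnonneg : 0 ≤ (b - a) * ((a - 1) * (b - φ) + (b - 1) * (a - φ)) := by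
    apply mul_nonneg (sub_nonneg.2 hab)
    apply add_nonneg <;> apply mul_nonneg <;> linarith
  rw [div_le_div_iff₀ (hden a ha) (hden b hb)]
  linarith

theorem lt_risk_of_signal_eq_zero {φ σ2 θ : ℝ} {R : ℝ → ℝ} (hφ : 0 < φ) (hσ : 0 < σ2)
    (hR1 : ∀ θ : ℝ, θ < 1 → R θ = σ2 + σ2 * φ / (1 - φ))
    (hR2 : ∀ θ : ℝ, 1 < θ → R θ = σ2 + σ2 * φ / (θ ^ 2 - φ))
    (hθφ : φ ≤ θ) (hθ1 : θ ≠ 1) : σ2 < R θ := by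
  rcases hθ1.lt_or_gt with hθ | hθ
  · have : 0 < σ2 * φ / (1 - φ) := div_pos (mul_pos hσ hφ) (by linarith)
    linarith [hR1 θ hθ]
  · have : 0 < σ2 * φ / (θ ^ 2 - φ) := div_pos (mul_pos hσ hφ) (by nlinarith)
    linarith [hR2 θ hθ]

theorem tendsto_risk_of_signal_eq_zero {φ σ2 : ℝ} {R : ℝ → ℝ}
    (hR2 : ∀ θ : ℝ, 1 < θ → R θ = σ2 + σ2 * φ / (θ ^ 2 - φ)) :
    Tendsto R atTop (𝓝 σ2) := by
  have hlim := (tendsto_div_sq_sub_atTop (σ2 * φ) φ).const_add σ2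
  rw [add_zero] at hlim
  refine hlim.congr' ?_
  filter_upwards [eventually_gt_atTop 1] with θ hθ
  rw [hR2 θ hθ]

theorem monotoneOn_risk_of_noise_eq_zero {φ ρ2 : ℝ} {R : ℝ → ℝ} (hφ : 1 < φ) (hρ : 0 ≤ ρ2)
    (hR2 : ∀ θ : ℝ, 1 < θ → R θ = ρ2 * ((θ - 1) ^ 2 / (θ ^ 2 - φ))) :
    MonotoneOn R (Ici φ) := by
  intro a (ha : φ ≤ a) b (hb : φ ≤ b) hab
  rw [hR2 a (hφ.trans_le ha), hR2 b (hφ.trans_le hb)]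
  exact mul_le_mul_of_nonneg_left (monotoneOn_sq_sub_one_div_sq_sub hφ ha hb hab) hρ

/-- Optimal subagged ridgeless risk under isotropic features in the degenerate
signal-to-noise regimes `SNR = 0` and `SNR = ∞`. -/
theorem isotropic_subagged_ridgeless_degenerate_snr
    (φ : ℝ) (hφ : 0 < φ) (ρ2 σ2 : ℝ)
    (R : ℝ → ℝ)
    (hR1 : ∀ θ : ℝ, θ < 1 → R θ = σ2 + σ2 * φ / (1 - φ))
    (hR2 : ∀ θ : ℝ, 1 < θ →
      R θ = σ2 + ρ2 * (θ - 1) ^ 2 / (θ ^ 2 - φ) + σ2 * φ / (θ ^ 2 - φ)) :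
    ((ρ2 = 0 ∧ 0 < σ2) →
      (∀ θ : ℝ, φ ≤ θ → θ ≠ 1 → σ2 < R θ)
      ∧ sInf (R '' {θ : ℝ | φ ≤ θ ∧ θ ≠ 1}) = σ2
      ∧ Tendsto R atTop (nhds σ2))
    ∧ ((σ2 = 0 ∧ 0 < ρ2) →
      (φ < 1 →
        (∀ θ : ℝ, φ ≤ θ → θ < 1 → R θ = 0) ∧ (∀ θ : ℝ, 1 < θ → 0 < R θ))
      ∧ (1 < φ →
        MonotoneOn R (Ici φ)
        ∧ (∀ θ : ℝ, φ ≤ θ → R φ ≤ R θ)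
        ∧ R φ = ρ2 * (φ - 1) / φ)) := by
  constructor
  · rintro ⟨rfl, hσ⟩
    have hR2' : ∀ θ : ℝ, 1 < θ → R θ = σ2 + σ2 * φ / (θ ^ 2 - φ) := fun θ hθ => by
      rw [hR2 θ hθ]; ring
    have hgt : ∀ θ, φ ≤ θ → θ ≠ 1 → σ2 < R θ := fun _ => lt_risk_of_signal_eq_zero hφ hσ hR1 hR2'
    have hlarge : ∀ᶠ θ in atTop, θ ∈ {θ : ℝ | φ ≤ θ ∧ θ ≠ 1} :=
      (eventually_ge_atTop φ).and (eventually_gt_atTop 1 |>.mono fun _ h => h.ne')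
    have hlim := tendsto_risk_of_signal_eq_zero hR2'
    exact ⟨hgt, csInf_image_eq_of_tendsto_of_forall_le hlarge
      (fun θ hθ => (hgt θ hθ.1 hθ.2).le) hlim, hlim⟩
  · rintro ⟨rfl, hρ⟩
    have hR2' : ∀ θ : ℝ, 1 < θ → R θ = ρ2 * ((θ - 1) ^ 2 / (θ ^ 2 - φ)) := fun θ hθ => by
      rw [hR2 θ hθ]; ring
    refine ⟨fun hφ1 => ⟨fun θ _ hθ => by rw [hR1 θ hθ]; ring, fun θ hθ => ?_⟩, fun hφ1 => ?_⟩
    · rw [hR2' θ hθ]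
      exact mul_pos hρ (div_pos (by nlinarith) (by nlinarith))
    · have hmono := monotoneOn_risk_of_noise_eq_zero hφ1 hρ.le hR2'
      refine ⟨hmono, fun θ hθ => hmono self_mem_Ici hθ hθ, ?_⟩
      rw [hR2' φ hφ1]
      field_simp
end

section
/- Fix φ ∈ (0, ∞), σ² > 0, ρ² > 0, and let SNR = ρ²/σ². Let R_φ be the isotropic subagged ridgeless risk function on [φ, ∞) \ {1}, and for λ > 0 let RidgeRisk(λ) = σ² + ρ²·(1 + t(λ))/(1 + v(λ))² + σ²·t(λ), where v(λ) = ( −(λ + φ − 1) + √((λ + φ − 1)² + 4λ) )/(2λ) and t(λ) = φ / ( (1 + v(λ))²/v(λ)² − φ ). Then inf_{θ ∈ [φ,∞)\{1}} R_φ(θ) = inf_{λ ∈ (0,∞)} RidgeRisk(λ), and both infima equal (σ²/2)·[ 1 + ((φ − 1)/φ)·SNR + √( (1 − ((φ − 1)/φ)·SNR)² + 4·SNR ) ]; the ridge-side infimum is attained at λ* = φ·σ²/ρ². (For isotropic features, the optimal limiting risk of the subagged ridgeless predictor equals the optimal limiting risk of the ridge predictor trained on the full data, optimized over the regularization parameter.)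 -/
set_option maxHeartbeats 1000000


/-- For isotropic features, the optimal limiting risk of the subagged ridgeless
predictor equals the optimal limiting risk of the ridge predictor trained on the full
data, optimized over the regularization parameter. -/
theorem isotropic_optimal_subagged_ridgeless_equals_optimal_ridge
    (φ σ2 ρ2 : ℝ) (hφ : 0 < φ) (hσ2 : 0 < σ2) (hρ2 : 0 < ρ2)
    (SNR : ℝ) (hSNR : SNR = ρ2 / σ2)
    (R : ℝ → ℝ)
    (hR1 : ∀ θ : ℝ, θ < 1 → R θ = σ2 + σ2 * φ / (1 - φ))
    (hR2 : ∀ θ : ℝ, 1 < θ →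
      R θ = σ2 + ρ2 * (θ - 1) ^ 2 / (θ ^ 2 - φ) + σ2 * φ / (θ ^ 2 - φ))
    (v t RidgeRisk : ℝ → ℝ)
    (hv : ∀ lam : ℝ, v lam =
      (-(lam + φ - 1) + Real.sqrt ((lam + φ - 1) ^ 2 + 4 * lam)) / (2 * lam))
    (ht : ∀ lam : ℝ, t lam = φ / ((1 + v lam) ^ 2 / (v lam) ^ 2 - φ))
    (hRR : ∀ lam : ℝ, RidgeRisk lam =
      σ2 + ρ2 * (1 + t lam) / (1 + v lam) ^ 2 + σ2 * t lam) :
    sInf {x : ℝ | ∃ θ : ℝ, φ ≤ θ ∧ θ ≠ 1 ∧ x = R θ}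
        = sInf {x : ℝ | ∃ lam : ℝ, 0 < lam ∧ x = RidgeRisk lam}
    ∧ sInf {x : ℝ | ∃ θ : ℝ, φ ≤ θ ∧ θ ≠ 1 ∧ x = R θ}
        = σ2 / 2 *
          (1 + (φ - 1) / φ * SNR
            + Real.sqrt ((1 - (φ - 1) / φ * SNR) ^ 2 + 4 * SNR))
    ∧ RidgeRisk (φ * σ2 / ρ2)
        = sInf {x : ℝ | ∃ lam : ℝ, 0 < lam ∧ x = RidgeRisk lam} := by
  have hφ' : (φ:ℝ) ≠ 0 := ne_of_gt hφ
  have hσ2' : σ2 ≠ 0 := ne_of_gt hσ2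
  have hρ2' : ρ2 ≠ 0 := ne_of_gt hρ2
  set w : ℝ := Real.sqrt ((φ*σ2 - (φ-1)*ρ2)^2 + 4*φ^2*ρ2*σ2) with hwdef
  have hw2 : w^2 = (φ*σ2 - (φ-1)*ρ2)^2 + 4*φ^2*ρ2*σ2 := by
    rw [hwdef]; exact Real.sq_sqrt (by positivity)
  have hw0 : 0 ≤ w := by rw [hwdef]; exact Real.sqrt_nonneg _
  have hposE : 0 < 4*φ^2*ρ2*σ2 := by positivity
  have hW1 : φ*σ2 - (φ-1)*ρ2 < w := by nlinarith [hw2, hw0, hposE]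
  have hW2 : (φ-1)*ρ2 - φ*σ2 < w := by nlinarith [hw2, hw0, hposE]
  have hW3 : w < (φ+1)*ρ2 + φ*σ2 := by
    have hA : 0 < (φ+1)*ρ2 + φ*σ2 := by positivity
    nlinarith [hw2, hw0, hA, mul_pos hφ (mul_pos hρ2 hρ2),
      mul_pos (mul_pos hφ hφ) (mul_pos hρ2 hσ2)]
  set θs : ℝ := (ρ2*(1+φ) + φ*σ2 + w)/(2*ρ2) with hθsdef
  set c : ℝ := ((φ-1)*ρ2 - φ*σ2 + w)/(2*φ) with hcdef
  have hth1 : 2*ρ2*θs = ρ2*(1+φ) + φ*σ2 + w := by rw [hθsdef]; field_simp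
  have hc1 : 2*φ*c = (φ-1)*ρ2 - φ*σ2 + w := by rw [hcdef]; field_simp
  -- quadratic satisfied by θs
  have hq4 : 4*ρ2*(ρ2*θs^2 - (ρ2 + φ*ρ2 + φ*σ2)*θs + φ*ρ2) = 0 := by
    linear_combination (2*ρ2*θs - (ρ2*(1+φ)+φ*σ2) + w)*hth1 + hw2
  have hq0 : ρ2*θs^2 - (ρ2 + φ*ρ2 + φ*σ2)*θs + φ*ρ2 = 0 :=
    (mul_eq_zero.mp hq4).resolve_left (by positivity : (4*ρ2:ℝ) ≠ 0)
  -- key identities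
  have key : ∀ θ : ℝ, ρ2*(θ-1)^2 + σ2*φ - c*(θ^2-φ) = (ρ2-c)*(θ-θs)^2 := by
    intro θ
    have h4 : φ*(ρ2*(θ-1)^2 + σ2*φ - c*(θ^2-φ)) = φ*((ρ2-c)*(θ-θs)^2) := by
      linear_combination ((θs^2 - 2*θ*θs + φ)/2)*hc1 - ((θs^2 - 2*θ*θs + φ)/2)*hth1
        + (θs - 2*θ)*hq0
    exact mul_left_cancel₀ hφ' h4
  have key2 : ∀ u : ℝ, ρ2 + σ2*φ*u^2 - c*((1+u)^2 - φ*u^2) = (ρ2-c)*((1-θs)*u+1)^2 := by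
    intro u
    have h4 : φ*(ρ2 + σ2*φ*u^2 - c*((1+u)^2 - φ*u^2)) = φ*((ρ2-c)*((1-θs)*u+1)^2) := by
      linear_combination ((-2*θs*u - 2*θs*u^2 + θs^2*u^2 + φ*u^2)/2)*hc1
        - ((-2*θs*u - 2*θs*u^2 + θs^2*u^2 + φ*u^2)/2)*hth1
        + (-2*u - 2*u^2 + θs*u^2)*hq0
    exact mul_left_cancel₀ hφ' h4
  -- basic bounds
  have hρ2c : c < ρ2 := by
    have h2 : 2*φ*c < 2*φ*ρ2 := by linarith [hc1, hW3]
    exact lt_of_mul_lt_mul_left (by linarith) (by positivity : (0:ℝ) ≤ 2*φ)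
  have hθs1 : 1 < θs := by
    have h2 : 2*ρ2*1 < 2*ρ2*θs := by
      rw [hth1]; nlinarith [hW1, mul_pos hφ hσ2]
    exact lt_of_mul_lt_mul_left h2 (by positivity : (0:ℝ) ≤ 2*ρ2)
  have hθsφ : φ ≤ θs := by
    have h2 : 2*ρ2*φ ≤ 2*ρ2*θs := by
      rw [hth1]; nlinarith [hW2]
    exact le_of_mul_le_mul_left h2 (by positivity : (0:ℝ) < 2*ρ2)
  -- value at θs
  have hRθs : R θs = σ2 + c := by
    have hd : 0 < θs^2 - φ := by nlinarith [hθs1, hθsφ]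
    rw [hR2 θs hθs1]
    have hk0 : ρ2*(θs-1)^2 + σ2*φ - c*(θs^2-φ) = 0 := by
      have hk := key θs; rw [hk]; ring
    have h1 : ρ2*(θs-1)^2/(θs^2-φ) + σ2*φ/(θs^2-φ) = c := by
      rw [← add_div, div_eq_iff (ne_of_gt hd)]; linarith [hk0]
    linarith [h1]
  -- lower bound on the subagged side
  have hlow : ∀ θ : ℝ, φ ≤ θ → θ ≠ 1 → σ2 + c ≤ R θ := by
    intro θ hφθ hθ1
    rcases lt_or_gt_of_ne hθ1 with h | h
    · rw [hR1 θ h]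
      have hφ1 : φ < 1 := lt_of_le_of_lt hφθ h
      have hk0 : c*(1-φ) ≤ σ2*φ := by
        nlinarith [key 1, mul_nonneg (sub_nonneg.2 hρ2c.le) (sq_nonneg (1-θs))]
      have h1 : c ≤ σ2*φ/(1-φ) := (le_div_iff₀ (by linarith)).mpr hk0
      linarith
    · rw [hR2 θ h]
      have hd : 0 < θ^2 - φ := by nlinarith [h, hφθ]
      have hk0 : c*(θ^2-φ) ≤ ρ2*(θ-1)^2 + σ2*φ := by
        nlinarith [key θ, mul_nonneg (sub_nonneg.2 hρ2c.le) (sq_nonneg (θ-θs))]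
      have h1 : c ≤ ρ2*(θ-1)^2/(θ^2-φ) + σ2*φ/(θ^2-φ) := by
        rw [← add_div, le_div_iff₀ hd]; exact hk0
      linarith
  -- closed form for the optimum
  have hMform : σ2 + c = σ2 / 2 *
      (1 + (φ - 1) / φ * SNR
        + Real.sqrt ((1 - (φ - 1) / φ * SNR) ^ 2 + 4 * SNR)) := by
    rw [hSNR]
    have harg : (1 - (φ-1)/φ*(ρ2/σ2))^2 + 4*(ρ2/σ2) = (w/(φ*σ2))^2 := by
      rw [div_pow, hw2]; field_simp
    rw [harg, Real.sqrt_sq (by positivity)]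
    rw [hcdef]; field_simp; ring
  -- ridge side : structure lemma
  have hmain : ∀ lam : ℝ, 0 < lam → 0 < v lam ∧
      lam*(v lam)^2 + (lam+φ-1)*(v lam) - 1 = 0 ∧
      0 < (1+v lam)^2 - φ*(v lam)^2 ∧
      RidgeRisk lam = σ2 + (ρ2 + σ2*φ*(v lam)^2)/((1+v lam)^2 - φ*(v lam)^2) := by
    intro lam hlam
    set r : ℝ := Real.sqrt ((lam + φ - 1)^2 + 4*lam) with hrdef
    have hr2' : r^2 = (lam + φ - 1)^2 + 4*lam := by
      rw [hrdef]; exact Real.sq_sqrt (by positivity)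
    have hr0 : 0 ≤ r := by rw [hrdef]; exact Real.sqrt_nonneg _
    have hra : lam + φ - 1 < r := by nlinarith [hr2', hr0, hlam]
    have hveq : 2*lam*(v lam) = -(lam + φ - 1) + r := by
      rw [hv lam, ← hrdef]; field_simp
    have hupos : 0 < v lam := by nlinarith [hveq, hra, hlam]
    have hquad4 : 4*lam*(lam*(v lam)^2 + (lam+φ-1)*(v lam) - 1) = 0 := by
      linear_combination (2*lam*(v lam) + r + (lam+φ-1))*hveq + hr2'
    have hquad : lam*(v lam)^2 + (lam+φ-1)*(v lam) - 1 = 0 :=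
      (mul_eq_zero.mp hquad4).resolve_left (by positivity : (4*lam:ℝ) ≠ 0)
    have hX : (1+v lam)^2 - φ*(v lam)^2 = (1+v lam)*(1+lam*(v lam)^2) := by
      linear_combination (-(v lam))*hquad
    have hXpos : 0 < (1+v lam)^2 - φ*(v lam)^2 := by
      rw [hX]
      have h1 : 0 < 1 + v lam := by linarith
      have h2 : 0 < 1 + lam*(v lam)^2 := by nlinarith [mul_pos hlam (pow_pos hupos 2)]
      exact mul_pos h1 h2
    have hu0 : (v lam) ≠ 0 := ne_of_gt hupos
    have h1u : (1 + v lam) ≠ 0 := by positivity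
    have hXne : (1+v lam)^2 - φ*(v lam)^2 ≠ 0 := ne_of_gt hXpos
    have hRRv : RidgeRisk lam
        = σ2 + (ρ2 + σ2*φ*(v lam)^2)/((1+v lam)^2 - φ*(v lam)^2) := by
      rw [hRR lam, ht lam]
      rw [show (1+v lam)^2/(v lam)^2 - φ = ((1+v lam)^2 - φ*(v lam)^2)/(v lam)^2 by
        field_simp]
      rw [div_div_eq_mul_div]
      field_simp
      ring
    exact ⟨hupos, hquad, hXpos, hRRv⟩
  -- lower bound on the ridge side
  have hlow2 : ∀ lam : ℝ, 0 < lam → σ2 + c ≤ RidgeRisk lam := by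
    intro lam hlam
    obtain ⟨hupos, hquad, hXpos, hRRv⟩ := hmain lam hlam
    have hk0 : c*((1+v lam)^2 - φ*(v lam)^2) ≤ ρ2 + σ2*φ*(v lam)^2 := by
      nlinarith [key2 (v lam),
        mul_nonneg (sub_nonneg.2 hρ2c.le) (sq_nonneg ((1-θs)*(v lam)+1))]
    have h1 : c ≤ (ρ2 + σ2*φ*(v lam)^2)/((1+v lam)^2 - φ*(v lam)^2) :=
      (le_div_iff₀ hXpos).mpr hk0
    rw [hRRv]; linarith
  -- attainment on the ridge side
  have hlams : 0 < φ*σ2/ρ2 := by positivity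
  have hatt : RidgeRisk (φ*σ2/ρ2) = σ2 + c := by
    obtain ⟨hupos, hquad, hXpos, hRRv⟩ := hmain _ hlams
    set u : ℝ := v (φ*σ2/ρ2) with hudef
    have he3 : ρ2*(φ*σ2/ρ2) = φ*σ2 := by field_simp
    have hpos1 : 0 < (φ*σ2/ρ2)*u + ((φ*σ2/ρ2)+φ-1) := by
      by_contra hcon
      push_neg at hcon
      linarith [hquad, mul_nonneg hupos.le (neg_nonneg.mpr hcon)]
    have hK : 0 < (θs-1)*((φ*σ2/ρ2)*u + ((φ*σ2/ρ2)+φ-1)) + (φ*σ2/ρ2) := by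
      linarith [mul_pos (sub_pos.mpr hθs1) hpos1, hlams]
    have hGK : ρ2*(((1-θs)*u+1) *
        ((θs-1)*((φ*σ2/ρ2)*u + ((φ*σ2/ρ2)+φ-1)) + (φ*σ2/ρ2))) = 0 := by
      linear_combination ((-1 + 2*θs - θs^2)*ρ2)*hquad + (-1)*hq0 + θs*he3
    have hG : (1-θs)*u + 1 = 0 := by
      have h1 := (mul_eq_zero.mp hGK).resolve_left hρ2'
      exact (mul_eq_zero.mp h1).resolve_right (ne_of_gt hK)
    have h0 : (ρ2-c)*((1-θs)*u+1)^2 = 0 := by rw [hG]; ring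
    have hnum : ρ2 + σ2*φ*u^2 = c*((1+u)^2 - φ*u^2) := by
      linarith [key2 u, h0]
    rw [hRRv, hnum, mul_div_assoc, div_self (ne_of_gt hXpos), mul_one]
  -- assemble infima
  have hMem1 : (σ2 + c) ∈ {x : ℝ | ∃ θ : ℝ, φ ≤ θ ∧ θ ≠ 1 ∧ x = R θ} :=
    ⟨θs, hθsφ, ne_of_gt hθs1, hRθs.symm⟩
  have hlb1 : ∀ x ∈ {x : ℝ | ∃ θ : ℝ, φ ≤ θ ∧ θ ≠ 1 ∧ x = R θ}, σ2 + c ≤ x := by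
    rintro x ⟨θ, h1, h2, rfl⟩; exact hlow θ h1 h2
  have hInf1 : sInf {x : ℝ | ∃ θ : ℝ, φ ≤ θ ∧ θ ≠ 1 ∧ x = R θ} = σ2 + c :=
    le_antisymm (csInf_le ⟨σ2 + c, hlb1⟩ hMem1) (le_csInf ⟨_, hMem1⟩ hlb1)
  have hMem2 : (σ2 + c) ∈ {x : ℝ | ∃ lam : ℝ, 0 < lam ∧ x = RidgeRisk lam} :=
    ⟨φ*σ2/ρ2, hlams, hatt.symm⟩
  have hlb2 : ∀ x ∈ {x : ℝ | ∃ lam : ℝ, 0 < lam ∧ x = RidgeRisk lam}, σ2 + c ≤ x := by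
    rintro x ⟨lam, h1, rfl⟩; exact hlow2 lam h1
  have hInf2 : sInf {x : ℝ | ∃ lam : ℝ, 0 < lam ∧ x = RidgeRisk lam} = σ2 + c :=
    le_antisymm (csInf_le ⟨σ2 + c, hlb2⟩ hMem2) (le_csInf ⟨_, hMem2⟩ hlb2)
  refine ⟨by rw [hInf1, hInf2], by rw [hInf1, hMform], by rw [hInf2, hatt]⟩
end

section
/- Let 𝓡 be a real-valued function defined on the set { (φ, θ) : 0 < φ ≤ θ < ∞ } such that: (a) 𝓡(φ, θ) ≥ 0 for all φ ≤ θ; (b) for every θ, the map φ ↦ 𝓡(φ, θ) is non-decreasing on (0, θ]; and (c) 2𝓡(φ, θ) − 𝓡(θ, θ) ≥ 0 for all φ ≤ θ. For M ∈ ℕ define 𝓡_M(φ, θ) = ( 2𝓡(φ, θ) − 𝓡(θ, θ) ) + (2/M)·( 𝓡(θ, θ) − 𝓡(φ, θ) ). Then for every M ∈ ℕ, the map φ ↦ inf_{θ ∈ [φ, ∞)} 𝓡_M(φ, θ) is non-decreasing on (0, ∞). (Monotonicity in the data aspect ratio of the limiting risk of the cross-validated bagged predictor that optimizes over the subsample aspect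 ratio.) -/
open Set

/-!
Write `a = R φ θ` and `b = R θ θ`, so that `𝓡_M(φ, θ) = (2 - 2/M) a + (2/M - 1) b`. For `M ≥ 1`
the coefficient of `a` is nonnegative, so monotonicity of `φ ↦ R φ θ` makes `𝓡_M(φ₁, θ) ≤ 𝓡_M(φ₂, θ)`
for every `θ ≥ φ₂ ≥ φ₁`; since the infimum at `φ₁` also ranges over the larger set `[φ₁, ∞)`, it is the
smaller one. The sets are bounded below by `0`, as `𝓡_M(φ, θ) ≥ 2a - b ≥ 0` because `a ≤ b`.
-/

theorem csInf_image_Ici_le_csInf_image_Ici {ι α : Type*} [Preorder ι]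
    [ConditionallyCompleteLattice α] {f g : ι → α} {a b : ι} (hab : a ≤ b)
    (hf : BddBelow (f '' Ici a)) (hfg : ∀ θ ∈ Ici b, f θ ≤ g θ) :
    sInf (f '' Ici a) ≤ sInf (g '' Ici b) := by
  refine le_csInf ((nonempty_Ici).image g) ?_
  rintro _ ⟨θ, hθ, rfl⟩
  exact (csInf_le hf (mem_image_of_mem f (mem_Ici.2 (hab.trans hθ)))).trans (hfg θ hθ)

theorem two_mul_sub_add_mul_sub_nonneg {a b c : ℝ} (hc : 0 ≤ c) (hab : a ≤ b)
    (h : 0 ≤ 2 * a - b) : 0 ≤ 2 * a - b + c * (b - a) :=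
  add_nonneg h (mul_nonneg hc (sub_nonneg.2 hab))

theorem two_mul_sub_add_mul_sub_le {a₁ a₂ b c : ℝ} (hc : c ≤ 2) (h : a₁ ≤ a₂) :
    2 * a₁ - b + c * (b - a₁) ≤ 2 * a₂ - b + c * (b - a₂) := by
  nlinarith [mul_nonneg (sub_nonneg.2 hc) (sub_nonneg.2 h)]

theorem cross_validated_bagged_risk_monotone_general
    (R : ℝ → ℝ → ℝ)
    (hmono : ∀ θ : ℝ, 0 < θ → MonotoneOn (fun φ => R φ θ) (Ioc 0 θ))
    (hc : ∀ φ θ : ℝ, 0 < φ → φ ≤ θ → 0 ≤ 2 * R φ θ - R θ θ)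
    (RM : ℕ → ℝ → ℝ → ℝ)
    (hRM : ∀ (M : ℕ) (φ θ : ℝ),
      RM M φ θ = (2 * R φ θ - R θ θ) + 2 / (M : ℝ) * (R θ θ - R φ θ)) :
    ∀ M : ℕ, 1 ≤ M → ∀ φ₁ φ₂ : ℝ, 0 < φ₁ → φ₁ ≤ φ₂ →
      sInf {x : ℝ | ∃ θ : ℝ, φ₁ ≤ θ ∧ x = RM M φ₁ θ}
        ≤ sInf {x : ℝ | ∃ θ : ℝ, φ₂ ≤ θ ∧ x = RM M φ₂ θ} := by
  intro M hM φ₁ φ₂ hφ₁ h12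
  have hR : ∀ {φ φ' θ : ℝ}, 0 < φ → φ ≤ φ' → φ' ≤ θ → R φ θ ≤ R φ' θ :=
    fun {_ _ θ} hφ hφφ' hφ'θ => hmono θ (hφ.trans_le (hφφ'.trans hφ'θ))
      ⟨hφ, hφφ'.trans hφ'θ⟩ ⟨hφ.trans_le hφφ', hφ'θ⟩ hφφ'
  have hM_le : 2 / (M : ℝ) ≤ 2 := div_le_self zero_le_two (by exact_mod_cast hM)
  have hset : ∀ φ, {x : ℝ | ∃ θ : ℝ, φ ≤ θ ∧ x = RM M φ θ} = RM M φ '' Ici φ := by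
    intro φ; ext; simp [eq_comm]
  rw [hset, hset]
  refine csInf_image_Ici_le_csInf_image_Ici h12 ⟨0, ?_⟩ fun θ hθ => ?_
  · rintro _ ⟨θ, hθ, rfl⟩
    rw [hRM]
    exact two_mul_sub_add_mul_sub_nonneg (by positivity) (hR hφ₁ hθ le_rfl) (hc φ₁ θ hφ₁ hθ)
  · rw [hRM, hRM]
    exact two_mul_sub_add_mul_sub_le hM_le (hR hφ₁ h12 hθ)

/-- Monotonicity in the data aspect ratio of the limiting risk of the cross-validated
bagged predictor optimizing over the subsample aspect ratio. -/
theorem cross_validated_bagged_risk_monotone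
    (R : ℝ → ℝ → ℝ)
    (hnonneg : ∀ φ θ : ℝ, 0 < φ → φ ≤ θ → 0 ≤ R φ θ)
    (hmono : ∀ θ : ℝ, 0 < θ → MonotoneOn (fun φ => R φ θ) (Ioc 0 θ))
    (hc : ∀ φ θ : ℝ, 0 < φ → φ ≤ θ → 0 ≤ 2 * R φ θ - R θ θ)
    (RM : ℕ → ℝ → ℝ → ℝ)
    (hRM : ∀ (M : ℕ) (φ θ : ℝ),
      RM M φ θ = (2 * R φ θ - R θ θ) + 2 / (M : ℝ) * (R θ θ - R φ θ)) :
    ∀ M : ℕ, 1 ≤ M → ∀ φ₁ φ₂ : ℝ, 0 < φ₁ → φ₁ ≤ φ₂ →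
      sInf {x : ℝ | ∃ θ : ℝ, φ₁ ≤ θ ∧ x = RM M φ₁ θ}
        ≤ sInf {x : ℝ | ∃ θ : ℝ, φ₂ ≤ θ ∧ x = RM M φ₂ θ} :=
  cross_validated_bagged_risk_monotone_general R hmono hc RM hRM
end
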